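/- arXiv:1410.1242 — 5 statements merged into one kernel-verified Lean document; each statement's English description precedes it below -/
import Mathlib

section
/- Let y be a configuration of the 1-dimensional Ising model on a path with boundary value 0, having sufficient statistics T_1(y) = a (number of ones) and T_2(y) = b. Then the number of connected components of y equals b/2, and if y maximizes the number of singleton components among all configurations with the same (a, b), then y consists of exactly b/2 − 1 singletons and one connected component of size a − b/2 + 1. -/
open Finset

/-- Number of ones of a 1-dimensional configuration on the path `{1,…,n}`. -/
def T1 (n : ℕ) (y : ℕ → ℕ) : ℕ := ∑ i ∈ Finset.Icc 1 n, y i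

/-- Boundary statistic: number of edges `(i, i+1)` whose endpoints differ. -/
def T2 (n : ℕ) (y : ℕ → ℕ) : ℕ :=
  ∑ i ∈ Finset.Ico 1 n, if y i = y (i + 1) then 0 else 1

/-- Number of connected components (maximal runs of ones). -/
def numComponents (n : ℕ) (y : ℕ → ℕ) : ℕ :=
  ((Finset.Icc 1 n).filter (fun i => y i = 1 ∧ y (i - 1) = 0)).card

/-- Number of singleton components. -/
def numSingletons (n : ℕ) (y : ℕ → ℕ) : ℕ :=
  ((Finset.Icc 1 n).filter (fun i => y i = 1 ∧ y (i - 1) = 0 ∧ y (i + 1) = 0)).card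

lemma telescope (y : ℕ → ℕ) (n : ℕ) (hn : 1 ≤ n) :
    ∑ i ∈ Finset.Ico 1 n, ((y (i+1) : ℤ) - y i) = (y n : ℤ) - y 1 := by
  induction n, hn using Nat.le_induction with
  | base => simp
  | succ n hn ih =>
    rw [Finset.sum_Ico_succ_top hn, ih]
    ring

lemma T2_eq_two_mul (n : ℕ) (y : ℕ → ℕ) (h01 : ∀ i, y i ≤ 1) (hb1 : y 1 = 0)
    (hbn : y n = 0) : T2 n y = 2 * numComponents n y := by
  set R : ℕ := ((Finset.Ico 1 n).filter (fun i => y i = 0 ∧ y (i+1) = 1)).card with hR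
  set F : ℕ := ((Finset.Ico 1 n).filter (fun i => y i = 1 ∧ y (i+1) = 0)).card with hF
  have hT2 : T2 n y = R + F := by
    rw [hR, hF, Finset.card_filter, Finset.card_filter, ← Finset.sum_add_distrib]
    unfold T2
    refine Finset.sum_congr rfl fun i _ => ?_
    have := h01 i; have := h01 (i+1)
    split_ifs <;> omega
  have hRF : R = F := by
    have hsum : ∑ i ∈ Finset.Ico 1 n, ((y (i+1) : ℤ) - y i) = 0 := by
      rcases Nat.lt_or_ge n 1 with h | h
      · interval_cases n
        simp
      · rw [telescope y n h, hbn, hb1]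
        simp
    have hsplit : ∑ i ∈ Finset.Ico 1 n, ((y (i+1) : ℤ) - y i)
        = (R : ℤ) - F := by
      rw [hR, hF, Finset.card_filter, Finset.card_filter]
      push_cast
      rw [← Finset.sum_sub_distrib]
      refine Finset.sum_congr rfl fun i _ => ?_
      have := h01 i; have := h01 (i+1)
      split_ifs <;> omega
    have : (R : ℤ) - F = 0 := by rw [← hsplit, hsum]
    omega
  have hRC : numComponents n y = R := by
    unfold numComponents
    rw [hR]
    refine Finset.card_bij' (fun i _ => i - 1) (fun i _ => i + 1) ?_ ?_ ?_ ?_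
    · intro i hi
      simp only [Finset.mem_filter, Finset.mem_Icc] at hi
      simp only [Finset.mem_filter, Finset.mem_Ico]
      have h2 : 2 ≤ i := by
        rcases Nat.lt_or_ge i 2 with h | h
        · interval_cases i <;> omega
        · exact h
      have : i - 1 + 1 = i := by omega
      exact ⟨⟨by omega, by omega⟩, hi.2.2, by rw [this]; exact hi.2.1⟩
    · intro i hi
      simp only [Finset.mem_filter, Finset.mem_Ico] at hi
      simp only [Finset.mem_filter, Finset.mem_Icc]
      have : i + 1 - 1 = i := by omega
      exact ⟨⟨by omega, by omega⟩, hi.2.2, by rw [this]; exact hi.2.1⟩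
    · intro i hi
      simp only [Finset.mem_filter, Finset.mem_Icc] at hi
      have h2 : 2 ≤ i := by
        rcases Nat.lt_or_ge i 2 with h | h
        · interval_cases i <;> omega
        · exact h
      show i - 1 + 1 = i
      omega
    · intro i hi
      show i + 1 - 1 = i
      omega
  omega

lemma descent (y : ℕ → ℕ) (h01 : ∀ i, y i ≤ 1) (hb1 : y 1 = 0)
    (i : ℕ) (h1 : 1 ≤ i) (hy : y i = 1) :
    ∃ q, 1 ≤ q ∧ q ≤ i ∧ y (q - 1) = 0 ∧ ∀ m, q ≤ m → m ≤ i → y m = 1 := by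
  induction i using Nat.strong_induction_on with
  | _ i ih =>
    by_cases h : y (i - 1) = 0
    · exact ⟨i, h1, le_refl i, h, fun m hm hm' => by
        have : m = i := le_antisymm hm' hm
        rwa [this]⟩
    · have hi2 : 2 ≤ i := by
        rcases Nat.lt_or_ge i 2 with h2 | h2
        · have hi1 : i = 1 := by omega
          rw [hi1, hb1] at hy
          omega
        · exact h2
      have hyi1 : y (i - 1) = 1 := by have := h01 (i - 1); omega
      obtain ⟨q, hq1, hq2, hq3, hq4⟩ := ih (i - 1) (by omega) (by omega) hyi1
      refine ⟨q, hq1, by omega, hq3, fun m hm hm' => ?_⟩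
      rcases Nat.lt_or_ge m i with h' | h'
      · exact hq4 m hm (by omega)
      · have : m = i := by omega
        rwa [this]

def cfg (a k i : ℕ) : ℕ :=
  if (2 ≤ i ∧ i ≤ 2 * k - 2 ∧ i % 2 = 0) ∨ (2 * k ≤ i ∧ i ≤ a + k) then 1 else 0

lemma cfg_le_one (a k i : ℕ) : cfg a k i ≤ 1 := by
  unfold cfg; split_ifs <;> omega

lemma cfg_eq_one (a k i : ℕ) :
    cfg a k i = 1 ↔ ((2 ≤ i ∧ i ≤ 2 * k - 2 ∧ i % 2 = 0) ∨ (2 * k ≤ i ∧ i ≤ a + k)) := by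
  unfold cfg; split_ifs with h <;> simp [h]

lemma cfg_eq_zero (a k i : ℕ) :
    cfg a k i = 0 ↔ ¬((2 ≤ i ∧ i ≤ 2 * k - 2 ∧ i % 2 = 0) ∨ (2 * k ≤ i ∧ i ≤ a + k)) := by
  unfold cfg; split_ifs with h <;> simp [h]

lemma cfg_ones (n a k : ℕ) (hk1 : 1 ≤ k) (hka : k ≤ a) (hn : a + k < n) :
    ((Finset.Icc 1 n).filter (fun i => cfg a k i = 1)).card = a := by
  have : ((Finset.Icc 1 n).filter (fun i => cfg a k i = 1)).card = (Finset.Icc 1 a).card := by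
    refine Finset.card_bij' (fun i _ => if i < 2 * k then i / 2 else i - k)
      (fun j _ => if j < k then 2 * j else j + k) ?_ ?_ ?_ ?_
    · intro i hi
      simp only [Finset.mem_filter, Finset.mem_Icc, cfg_eq_one] at hi
      simp only [Finset.mem_Icc]
      split_ifs <;> omega
    · intro j hj
      simp only [Finset.mem_Icc] at hj
      simp only [Finset.mem_filter, Finset.mem_Icc, cfg_eq_one]
      split_ifs <;> omega
    · intro i hi
      simp only [Finset.mem_filter, Finset.mem_Icc, cfg_eq_one] at hi
      split_ifs <;> omega
    · intro j hj
      simp only [Finset.mem_Icc] at hj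
      split_ifs <;> omega
  rw [this, Nat.card_Icc]
  omega

lemma cfg_T1 (n a k : ℕ) (hk1 : 1 ≤ k) (hka : k ≤ a) (hn : a + k < n) :
    T1 n (cfg a k) = a := by
  have h1 : T1 n (cfg a k) = ((Finset.Icc 1 n).filter (fun i => cfg a k i = 1)).card := by
    rw [Finset.card_filter]
    unfold T1
    refine Finset.sum_congr rfl fun i _ => ?_
    have := cfg_le_one a k i
    split_ifs with h <;> omega
  rw [h1, cfg_ones n a k hk1 hka hn]

lemma cfg_comp (n a k : ℕ) (hk1 : 1 ≤ k) (hka : k ≤ a) (hn : a + k < n) :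
    numComponents n (cfg a k) = k := by
  unfold numComponents
  have : ((Finset.Icc 1 n).filter (fun i => cfg a k i = 1 ∧ cfg a k (i - 1) = 0)).card
      = (Finset.Icc 1 k).card := by
    refine Finset.card_bij' (fun i _ => i / 2) (fun j _ => 2 * j) ?_ ?_ ?_ ?_
    · intro i hi
      simp only [Finset.mem_filter, Finset.mem_Icc, cfg_eq_one, cfg_eq_zero] at hi
      simp only [Finset.mem_Icc]
      omega
    · intro j hj
      simp only [Finset.mem_Icc] at hj
      simp only [Finset.mem_filter, Finset.mem_Icc, cfg_eq_one, cfg_eq_zero]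
      omega
    · intro i hi
      simp only [Finset.mem_filter, Finset.mem_Icc, cfg_eq_one, cfg_eq_zero] at hi
      show 2 * (i / 2) = i
      omega
    · intro j hj
      simp only [Finset.mem_Icc] at hj
      show 2 * j / 2 = j
      omega
  rw [this, Nat.card_Icc]
  omega

lemma cfg_sing (n a k : ℕ) (hk1 : 1 ≤ k) (hka : k ≤ a) (hn : a + k < n) :
    k - 1 ≤ numSingletons n (cfg a k) := by
  have hsub : (Finset.Icc 1 (k-1)).image (fun j => 2 * j)
      ⊆ (Finset.Icc 1 n).filter (fun i => cfg a k i = 1 ∧ cfg a k (i - 1) = 0 ∧ cfg a k (i + 1) = 0) := by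
    intro i hi
    simp only [Finset.mem_image, Finset.mem_Icc] at hi
    obtain ⟨j, hj, rfl⟩ := hi
    simp only [Finset.mem_filter, Finset.mem_Icc, cfg_eq_one, cfg_eq_zero]
    omega
  have hcard : ((Finset.Icc 1 (k-1)).image (fun j => 2 * j)).card = k - 1 := by
    rw [Finset.card_image_of_injective _ (fun x y h => by omega), Nat.card_Icc]
    omega
  calc k - 1 = ((Finset.Icc 1 (k-1)).image (fun j => 2 * j)).card := hcard.symm
    _ ≤ _ := Finset.card_le_card hsub
  
lemma cfg_b1 (a k : ℕ) (hk1 : 1 ≤ k) : cfg a k 1 = 0 := by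
  rw [cfg_eq_zero]; omega

lemma cfg_bn (n a k : ℕ) (hka : k ≤ a) (hn : a + k < n) : cfg a k n = 0 := by
  rw [cfg_eq_zero]; omega

/-- The max-singleton configuration of `S(a,b)` in the 1-dimensional Ising model:
the number of components of any `y ∈ S(a,b)` is `b/2`, and a configuration
maximizing the number of singletons consists of `b/2 - 1` singletons and one
connected component of size `a - b/2 + 1`. -/
theorem max_singleton_one_dim (n a b : ℕ) (y : ℕ → ℕ)
    (h01 : ∀ i, y i ≤ 1) (hb1 : y 1 = 0) (hbn : y n = 0)
    (hT1 : T1 n y = a) (hT2 : T2 n y = b)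
    (ha : 1 ≤ a) (hb : Even b) (hn : 2 * a + 2 ≤ n)
    (hmax : ∀ y' : ℕ → ℕ, (∀ i, y' i ≤ 1) → y' 1 = 0 → y' n = 0 →
      T1 n y' = a → T2 n y' = b → numSingletons n y' ≤ numSingletons n y) :
    numComponents n y = b / 2 ∧
    ∃ p, 1 ≤ p ∧ p + (a - b / 2 + 1) ≤ n + 1 ∧
      (∀ i ∈ Finset.Ico p (p + (a - b / 2 + 1)), y i = 1) ∧
      y (p - 1) = 0 ∧ y (p + (a - b / 2 + 1)) = 0 ∧
      ∀ i ∈ Finset.Icc 1 n, y i = 1 →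
        i ∈ Finset.Ico p (p + (a - b / 2 + 1)) ∨ (y (i - 1) = 0 ∧ y (i + 1) = 0) := by
  set k := numComponents n y with hk
  set O := (Finset.Icc 1 n).filter (fun i => y i = 1) with hOdef
  set C := (Finset.Icc 1 n).filter (fun i => y i = 1 ∧ y (i - 1) = 0) with hCdef
  set S := (Finset.Icc 1 n).filter (fun i => y i = 1 ∧ y (i - 1) = 0 ∧ y (i + 1) = 0) with hSdef
  have hCk : C.card = k := rfl
  have hScard : S.card = numSingletons n y := rfl
  have hOcard : O.card = a := by
    rw [← hT1, hOdef, Finset.card_filter]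
    unfold T1
    refine Finset.sum_congr rfl fun i _ => ?_
    have := h01 i
    split_ifs <;> omega
  have hSC : S ⊆ C := by
    intro i hi
    simp only [hSdef, hCdef, Finset.mem_filter] at hi ⊢
    tauto
  have hCO : C ⊆ O := by
    intro i hi
    simp only [hOdef, hCdef, Finset.mem_filter] at hi ⊢
    tauto
  have hka : k ≤ a := by
    rw [← hCk, ← hOcard]; exact Finset.card_le_card hCO
  have hb2k : b = 2 * k := by
    rw [← hT2, T2_eq_two_mul n y h01 hb1 hbn]
  have hk1 : 1 ≤ k := by
    have hOne : O.Nonempty := by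
      rw [← Finset.card_pos, hOcard]; omega
    obtain ⟨i0, hi0⟩ := hOne
    simp only [hOdef, Finset.mem_filter, Finset.mem_Icc] at hi0
    obtain ⟨q, hq1, hq2, hq3, hq4⟩ := descent y h01 hb1 i0 hi0.1.1 hi0.2
    have hqC : q ∈ C := by
      simp only [hCdef, Finset.mem_filter, Finset.mem_Icc]
      exact ⟨⟨hq1, le_trans hq2 hi0.1.2⟩, hq4 q le_rfl hq2, hq3⟩
    have : C.Nonempty := ⟨q, hqC⟩
    rw [← hCk]
    exact Finset.card_pos.mpr this
  have hb2 : b / 2 = k := by omega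
  have hakn : a + k < n := by omega
  have hsmax : k - 1 ≤ numSingletons n y := by
    have := hmax (cfg a k) (cfg_le_one a k) (cfg_b1 a k hk1) (cfg_bn n a k hka hakn)
      (cfg_T1 n a k hk1 hka hakn)
      (by rw [T2_eq_two_mul n (cfg a k) (cfg_le_one a k) (cfg_b1 a k hk1) (cfg_bn n a k hka hakn),
            cfg_comp n a k hk1 hka hakn, hb2k])
    have h2 := cfg_sing n a k hk1 hka hakn
    omega
  have hshigh : numSingletons n y ≤ k := by
    rw [← hScard] at *
    rw [← hCk]
    exact Finset.card_le_card hSC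
  rw [hb2]
  refine ⟨rfl, ?_⟩
  by_cases hcase : S.card = k
  · -- all components are singletons
    have hSeqC : S = C := Finset.eq_of_subset_of_card_le hSC (by omega)
    have hall : ∀ i, 1 ≤ i → i ≤ n → y i = 1 → y (i - 1) = 0 ∧ y (i + 1) = 0 := by
      intro i hi1 hin hyi
      obtain ⟨q, hq1, hq2, hq3, hq4⟩ := descent y h01 hb1 i hi1 hyi
      have hqS : q ∈ S := by
        rw [hSeqC]
        simp only [hCdef, Finset.mem_filter, Finset.mem_Icc]
        exact ⟨⟨hq1, by omega⟩, hq4 q le_rfl hq2, hq3⟩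
      simp only [hSdef, Finset.mem_filter, Finset.mem_Icc] at hqS
      have hq1z : y (q + 1) = 0 := hqS.2.2.2
      have hqi : q = i := by
        rcases Nat.lt_or_ge q i with h | h
        · have := hq4 (q + 1) (by omega) (by omega)
          omega
        · omega
      rw [← hqi]
      exact ⟨hq3, hq1z⟩
    have hOC : O ⊆ C := by
      intro i hi
      simp only [hOdef, Finset.mem_filter, Finset.mem_Icc] at hi
      simp only [hCdef, Finset.mem_filter, Finset.mem_Icc]
      exact ⟨hi.1, hi.2, (hall i hi.1.1 hi.1.2 hi.2).1⟩
    have hak : a = k := by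
      have := Finset.card_le_card hOC
      omega
    have hOne : O.Nonempty := by rw [← Finset.card_pos, hOcard]; omega
    obtain ⟨i0, hi0⟩ := hOne
    simp only [hOdef, Finset.mem_filter, Finset.mem_Icc] at hi0
    have hL : a - k + 1 = 1 := by omega
    rw [hL]
    refine ⟨i0, hi0.1.1, by omega, ?_, ?_, ?_, ?_⟩
    · intro i hi
      simp only [Finset.mem_Ico] at hi
      have : i = i0 := by omega
      rw [this]; exact hi0.2
    · exact (hall i0 hi0.1.1 hi0.1.2 hi0.2).1
    · exact (hall i0 hi0.1.1 hi0.1.2 hi0.2).2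
    · intro i hi hyi
      simp only [Finset.mem_Icc] at hi
      exact Or.inr (hall i hi.1 hi.2 hyi)
  · -- exactly one non-singleton component
    have hcard : S.card = k - 1 := by omega
    have hD : (C \ S).card = 1 := by
      rw [Finset.card_sdiff_of_subset hSC]; omega
    obtain ⟨q, hqD⟩ := Finset.card_eq_one.mp hD
    have hqmem : q ∈ C \ S := by rw [hqD]; exact Finset.mem_singleton_self q
    rw [Finset.mem_sdiff] at hqmem
    obtain ⟨hqC, hqS⟩ := hqmem
    simp only [hCdef, Finset.mem_filter, Finset.mem_Icc] at hqC
    have hyq : y q = 1 := hqC.2.1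
    have hyq0 : y (q - 1) = 0 := hqC.2.2
    have hyq1 : y (q + 1) = 1 := by
      simp only [hSdef, Finset.mem_filter, Finset.mem_Icc] at hqS
      have := h01 (q + 1)
      by_contra h
      exact hqS ⟨⟨hqC.1.1, hqC.1.2⟩, hyq, hyq0, by omega⟩
    set B := (Finset.Icc 1 n).filter
      (fun i => y i = 1 ∧ ¬(y (i - 1) = 0 ∧ y (i + 1) = 0)) with hBdef
    have hBcard : B.card = a - k + 1 := by
      have hsplit := Finset.card_filter_add_card_filter_not
        (s := O) (p := fun i => y (i - 1) = 0 ∧ y (i + 1) = 0)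
      have h1 : O.filter (fun i => y (i - 1) = 0 ∧ y (i + 1) = 0) = S := by
        rw [hOdef, hSdef, Finset.filter_filter]
      have h2 : O.filter (fun i => ¬(y (i - 1) = 0 ∧ y (i + 1) = 0)) = B := by
        rw [hOdef, hBdef, Finset.filter_filter]
      rw [h1, h2] at hsplit
      omega
    have hrun : ∀ i ∈ B, q ≤ i ∧ ∀ m, q ≤ m → m ≤ i → y m = 1 := by
      intro i hi
      simp only [hBdef, Finset.mem_filter, Finset.mem_Icc] at hi
      obtain ⟨⟨hi1, hin⟩, hyi, hns⟩ := hi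
      obtain ⟨q', h1, h2, h3, h4⟩ := descent y h01 hb1 i hi1 hyi
      have hq'C : q' ∈ C := by
        simp only [hCdef, Finset.mem_filter, Finset.mem_Icc]
        exact ⟨⟨h1, by omega⟩, h4 q' le_rfl h2, h3⟩
      have hq'S : q' ∉ S := by
        intro hmem
        simp only [hSdef, Finset.mem_filter, Finset.mem_Icc] at hmem
        rcases Nat.lt_or_ge q' i with h' | h'
        · have := h4 (q' + 1) (by omega) (by omega)
          omega
        · have : q' = i := by omega
          rw [this] at hmem
          exact hns ⟨hmem.2.2.1, hmem.2.2.2⟩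
      have : q' ∈ C \ S := Finset.mem_sdiff.mpr ⟨hq'C, hq'S⟩
      rw [hqD, Finset.mem_singleton] at this
      subst this
      exact ⟨h2, h4⟩
    have hqB : q ∈ B := by
      simp only [hBdef, Finset.mem_filter, Finset.mem_Icc]
      exact ⟨⟨hqC.1.1, hqC.1.2⟩, hyq, by omega⟩
    have hBne : B.Nonempty := ⟨q, hqB⟩
    set r := B.max' hBne with hr
    have hrB : r ∈ B := B.max'_mem hBne
    have hrn : r ≤ n := by
      have := hrB
      simp only [hBdef, Finset.mem_filter, Finset.mem_Icc] at this
      exact this.1.2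
    have hBIcc : B = Finset.Icc q r := by
      ext i
      simp only [Finset.mem_Icc]
      constructor
      · intro hi
        exact ⟨(hrun i hi).1, B.le_max' i hi⟩
      · intro ⟨hqi, hir⟩
        have hyi : y i = 1 := (hrun r hrB).2 i hqi hir
        simp only [hBdef, Finset.mem_filter, Finset.mem_Icc]
        refine ⟨⟨by omega, by omega⟩, hyi, ?_⟩
        rcases Nat.lt_or_ge i r with h | h
        · have : y (i + 1) = 1 := (hrun r hrB).2 (i + 1) (by omega) (by omega)
          omega
        · have : i = r := by omega
          subst this
          have := hrB
          simp only [hBdef, Finset.mem_filter, Finset.mem_Icc] at this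
          exact this.2.2
    have hrq : q ≤ r := B.le_max' q hqB
    have hyr : y r = 1 := by
      have := hrB
      simp only [hBdef, Finset.mem_filter, Finset.mem_Icc] at this
      exact this.2.1
    have hcardIcc : r + 1 - q = a - k + 1 := by
      have h := hBcard
      rw [hBIcc, Nat.card_Icc] at h
      omega
    have hreq : q + (a - k + 1) = r + 1 := by omega
    have hyr1 : y (r + 1) = 0 := by
      by_contra h
      have hy1 : y (r + 1) = 1 := by have := h01 (r + 1); omega
      have hrltn : r < n := by
        rcases Nat.lt_or_ge r n with h' | h'
        · exact h'
        · have : r = n := by omega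
          rw [this, hbn] at hyr
          omega
      have hmem : r + 1 ∈ B := by
        simp only [hBdef, Finset.mem_filter, Finset.mem_Icc, Nat.add_sub_cancel]
        exact ⟨⟨by omega, by omega⟩, hy1, by omega⟩
      have := B.le_max' _ hmem
      omega
    refine ⟨q, hqC.1.1, ?_, ?_, hyq0, ?_, ?_⟩
    · rw [hreq]; omega
    · intro i hi
      rw [hreq, Finset.Ico_add_one_right_eq_Icc, ← hBIcc] at hi
      simp only [hBdef, Finset.mem_filter] at hi
      exact hi.2.1
    · rw [hreq]; exact hyr1
    · intro i hi hyi
      simp only [Finset.mem_Icc] at hi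
      by_cases hsing : y (i - 1) = 0 ∧ y (i + 1) = 0
      · exact Or.inr hsing
      · left
        rw [hreq, Finset.Ico_add_one_right_eq_Icc, ← hBIcc]
        simp only [hBdef, Finset.mem_filter, Finset.mem_Icc]
        exact ⟨⟨hi.1, hi.2⟩, hyi, hsing⟩
end

section
/- Let G be a subgraph of the 2-dimensional integer grid induced by a set of k vertices. Then the number of edges of G is at most ⌊2k − 2√k⌋. -/
open Finset

/-- Number of edges of the subgraph of the grid `ℤ²` induced by a finite vertex
set `A` (each edge counted once via its left/lower endpoint). -/
def gridEdges (A : Finset (ℤ × ℤ)) : ℕ :=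
  ∑ v ∈ A, (({(v.1 + 1, v.2), (v.1, v.2 + 1)} : Finset (ℤ × ℤ)).filter
    (fun w => w ∈ A)).card

lemma horiz (S : Finset (ℤ × ℤ)) :
    (S.filter (fun v => (v.1 + 1, v.2) ∈ S)).card + (S.image Prod.snd).card ≤ S.card := by
  classical
  set T' : Finset (ℤ×ℤ) := (S.filter (fun v => (v.1 + 1, v.2) ∈ S)).image
      (fun v => (v.1 + 1, v.2)) with hT'
  set M : Finset (ℤ×ℤ) := S.filter (fun v => ∀ w ∈ S, w.2 = v.2 → v.1 ≤ w.1) with hM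
  have hinj : ∀ x ∈ (S.filter (fun v => (v.1 + 1, v.2) ∈ S)),
      ∀ y ∈ (S.filter (fun v => (v.1 + 1, v.2) ∈ S)),
      (x.1 + 1, x.2) = (y.1 + 1, y.2) → x = y := by
    intro x _ y _ h
    simp only [Prod.mk.injEq] at h
    exact Prod.ext (by omega) h.2
  have hcardT' : T'.card = (S.filter (fun v => (v.1 + 1, v.2) ∈ S)).card :=
    card_image_of_injOn hinj
  have hcardM : M.card = (S.image Prod.snd).card := by
    apply card_bij (fun v _ => v.2)
    · intro v hv
      simp only [hM, mem_filter] at hv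
      exact mem_image_of_mem _ hv.1
    · intro v hv w hw h
      simp only [hM, mem_filter] at hv hw
      have h1 : v.1 ≤ w.1 := hv.2 w hw.1 h.symm
      have h2 : w.1 ≤ v.1 := hw.2 v hv.1 h
      exact Prod.ext (le_antisymm h1 h2) h
    · intro y hy
      obtain ⟨v, hv, rfl⟩ := mem_image.mp hy
      obtain ⟨m, hm, hmin⟩ := (S.filter (fun w => w.2 = v.2)).exists_min_image Prod.fst
        ⟨v, mem_filter.mpr ⟨hv, rfl⟩⟩
      simp only [mem_filter] at hm
      refine ⟨m, ?_, hm.2⟩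
      simp only [hM, mem_filter]
      exact ⟨hm.1, fun w hw hwm => hmin w (mem_filter.mpr ⟨hw, hwm.trans hm.2⟩)⟩
  have hdisj : Disjoint T' M := by
    rw [disjoint_left]
    intro u hu hM'
    simp only [hT', mem_image, mem_filter] at hu
    obtain ⟨v, ⟨hvS, hv1⟩, rfl⟩ := hu
    simp only [hM, mem_filter] at hM'
    have := hM'.2 v hvS rfl
    omega
  have hsub : T' ∪ M ⊆ S := by
    apply union_subset
    · intro u hu
      simp only [hT', mem_image, mem_filter] at hu
      obtain ⟨v, ⟨_, hv1⟩, rfl⟩ := hu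
      exact hv1
    · exact filter_subset _ _
  calc (S.filter (fun v => (v.1 + 1, v.2) ∈ S)).card + (S.image Prod.snd).card
      = T'.card + M.card := by rw [hcardT', hcardM]
    _ = (T' ∪ M).card := (card_union_of_disjoint hdisj).symm
    _ ≤ S.card := card_le_card hsub

lemma vert (S : Finset (ℤ × ℤ)) :
    (S.filter (fun v => (v.1, v.2 + 1) ∈ S)).card + (S.image Prod.fst).card ≤ S.card := by
  classical
  set T' : Finset (ℤ×ℤ) := (S.filter (fun v => (v.1, v.2 + 1) ∈ S)).image
      (fun v => (v.1, v.2 + 1)) with hT'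
  set M : Finset (ℤ×ℤ) := S.filter (fun v => ∀ w ∈ S, w.1 = v.1 → v.2 ≤ w.2) with hM
  have hinj : ∀ x ∈ (S.filter (fun v => (v.1, v.2 + 1) ∈ S)),
      ∀ y ∈ (S.filter (fun v => (v.1, v.2 + 1) ∈ S)),
      (x.1, x.2 + 1) = (y.1, y.2 + 1) → x = y := by
    intro x _ y _ h
    simp only [Prod.mk.injEq] at h
    exact Prod.ext h.1 (by omega)
  have hcardT' : T'.card = (S.filter (fun v => (v.1, v.2 + 1) ∈ S)).card :=
    card_image_of_injOn hinj
  have hcardM : M.card = (S.image Prod.fst).card := by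
    apply card_bij (fun v _ => v.1)
    · intro v hv
      simp only [hM, mem_filter] at hv
      exact mem_image_of_mem _ hv.1
    · intro v hv w hw h
      simp only [hM, mem_filter] at hv hw
      have h1 : v.2 ≤ w.2 := hv.2 w hw.1 h.symm
      have h2 : w.2 ≤ v.2 := hw.2 v hv.1 h
      exact Prod.ext h (le_antisymm h1 h2)
    · intro y hy
      obtain ⟨v, hv, rfl⟩ := mem_image.mp hy
      obtain ⟨m, hm, hmin⟩ := (S.filter (fun w => w.1 = v.1)).exists_min_image Prod.snd
        ⟨v, mem_filter.mpr ⟨hv, rfl⟩⟩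
      simp only [mem_filter] at hm
      refine ⟨m, ?_, hm.2⟩
      simp only [hM, mem_filter]
      exact ⟨hm.1, fun w hw hwm => hmin w (mem_filter.mpr ⟨hw, hwm.trans hm.2⟩)⟩
  have hdisj : Disjoint T' M := by
    rw [disjoint_left]
    intro u hu hM'
    simp only [hT', mem_image, mem_filter] at hu
    obtain ⟨v, ⟨hvS, hv1⟩, rfl⟩ := hu
    simp only [hM, mem_filter] at hM'
    have := hM'.2 v hvS rfl
    omega
  have hsub : T' ∪ M ⊆ S := by
    apply union_subset
    · intro u hu
      simp only [hT', mem_image, mem_filter] at hu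
      obtain ⟨v, ⟨_, hv1⟩, rfl⟩ := hu
      exact hv1
    · exact filter_subset _ _
  calc (S.filter (fun v => (v.1, v.2 + 1) ∈ S)).card + (S.image Prod.fst).card
      = T'.card + M.card := by rw [hcardT', hcardM]
    _ = (T' ∪ M).card := (card_union_of_disjoint hdisj).symm
    _ ≤ S.card := card_le_card hsub

lemma gridEdges_split (S : Finset (ℤ × ℤ)) :
    gridEdges S = (S.filter (fun v => (v.1 + 1, v.2) ∈ S)).card
      + (S.filter (fun v => (v.1, v.2 + 1) ∈ S)).card := by
  classical
  unfold gridEdges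
  rw [card_filter, card_filter, ← Finset.sum_add_distrib]
  apply Finset.sum_congr rfl
  intro v _
  have hne : ((v.1 + 1, v.2) : ℤ×ℤ) ≠ (v.1, v.2 + 1) := by
    simp only [ne_eq, Prod.mk.injEq]
    omega
  simp only [filter_insert, filter_singleton]
  split_ifs <;> simp [card_insert_of_notMem, hne]

/-- Harary–Harborth bound: the subgraph of the 2-dimensional integer grid induced
by `k` vertices has at most `⌊2k − 2√k⌋` edges. -/
theorem harary_harborth (k : ℕ) (S : Finset (ℤ × ℤ)) (hS : S.card = k) :
    (gridEdges S : ℤ) ≤ ⌊2 * (k : ℝ) - 2 * Real.sqrt k⌋ := by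
  classical
  set r := (S.image Prod.snd).card with hr
  set c := (S.image Prod.fst).card with hc
  have hH : (S.filter (fun v => (v.1 + 1, v.2) ∈ S)).card + r ≤ k := hS ▸ horiz S
  have hV : (S.filter (fun v => (v.1, v.2 + 1) ∈ S)).card + c ≤ k := hS ▸ vert S
  have hkrc : k ≤ c * r := by
    rw [← hS, hc, hr, ← card_product]
    apply card_le_card
    intro v hv
    exact mem_product.mpr ⟨mem_image_of_mem _ hv, mem_image_of_mem _ hv⟩
  have hE : gridEdges S + (r + c) ≤ 2 * k := by
    rw [gridEdges_split]; omega
  rw [Int.le_floor]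
  push_cast
  have hsqrt : 2 * Real.sqrt k ≤ (r : ℝ) + c := by
    rw [show (2 : ℝ) * Real.sqrt k = Real.sqrt (4 * k) by
      rw [show (4 : ℝ) * k = 2^2 * k by ring, Real.sqrt_mul (by positivity),
        Real.sqrt_sq (by norm_num)]]
    have hcr : (k : ℝ) ≤ (c : ℝ) * r := by exact_mod_cast hkrc
    have h1 : (4 : ℝ) * k ≤ ((r : ℝ) + c) ^ 2 := by
      nlinarith [sq_nonneg ((r : ℝ) - c)]
    calc Real.sqrt (4 * k) ≤ Real.sqrt (((r : ℝ) + c) ^ 2) := Real.sqrt_le_sqrt h1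
      _ = (r : ℝ) + c := Real.sqrt_sq (by positivity)
  have hE' : (gridEdges S : ℝ) + (r + c) ≤ 2 * k := by exact_mod_cast hE
  linarith
end

section
/- The maximal number of edges ⌊2k − 2√k⌋ of an induced subgraph of ℤ² on k vertices is attained by the 'quasi-square' configuration: take m = ⌊√k⌋, r = ⌊k/m⌋, and form an m × r solid rectangle together with a row of k − m·r additional consecutive cells attached along a side of length m; this vertex set induces exactly ⌊2k − 2√k⌋ edges. -/
open Finset

/-- The quasi-square with `k` cells: with `m = ⌊√k⌋` and `r = ⌊k/m⌋`, an `m × r`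
solid rectangle `[1,m] × [1,r]` together with `k − m·r` extra cells in column
`r + 1` at rows `1` through `k − m·r`. -/
noncomputable def quasiSquare (k : ℕ) : Finset (ℤ × ℤ) :=
  (Finset.Icc (1 : ℤ) (Nat.sqrt k : ℤ) ×ˢ Finset.Icc (1 : ℤ) ((k / Nat.sqrt k : ℕ) : ℤ)) ∪
  (Finset.Icc (1 : ℤ) ((k : ℤ) - (Nat.sqrt k : ℤ) * ((k / Nat.sqrt k : ℕ) : ℤ)) ×ˢ
    {((k / Nat.sqrt k : ℕ) : ℤ) + 1})

lemma gridEdges_eq (A : Finset (ℤ × ℤ)) :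
    gridEdges A = (A.filter (fun v => (v.1 + 1, v.2) ∈ A)).card
      + (A.filter (fun v => (v.1, v.2 + 1) ∈ A)).card := by
  have h : ∀ v : ℤ × ℤ, (({(v.1 + 1, v.2), (v.1, v.2 + 1)} : Finset (ℤ × ℤ)).filter
      (fun w => w ∈ A)).card
      = (if (v.1 + 1, v.2) ∈ A then 1 else 0) + (if (v.1, v.2 + 1) ∈ A then 1 else 0) := by
    intro v
    have hne : (v.1 + 1, v.2) ≠ (v.1, v.2 + 1) := by
      simp only [ne_eq, Prod.mk.injEq, not_and]
      intro h; omega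
    rw [filter_insert, filter_singleton]
    split_ifs <;> simp [hne]
  unfold gridEdges
  rw [Finset.sum_congr rfl (fun v _ => h v), Finset.sum_add_distrib,
    Finset.card_filter, Finset.card_filter]

lemma card_rect_strip (a b c e : ℤ) (hd : b < e) :
    ((Icc 1 a ×ˢ Icc 1 b) ∪ (Icc 1 c ×ˢ {e})).card = a.toNat * b.toNat + c.toNat := by
  rw [card_union_of_disjoint, card_product, card_product, card_singleton]
  · simp [Int.card_Icc]
  · rw [Finset.disjoint_left]
    rintro ⟨x, y⟩ hx hx'
    simp only [mem_product, mem_Icc, mem_singleton] at hx hx'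
    omega

lemma key_ineq (k M R S : ℕ) (hM : 1 ≤ M) (hS : S < M) (hk : M * R + S = k)
    (h1 : M * M ≤ k) (h2 : k < (M + 1) * (M + 1)) :
    (M + R + (if S = 0 then 0 else 1)) ^ 2 + 1 < 4 * k + 2 * (M + R + (if S = 0 then 0 else 1)) ∧
      4 * k ≤ (M + R + (if S = 0 then 0 else 1)) ^ 2 := by
  have hMR : M ≤ R := by nlinarith
  have hRM : R ≤ M + 2 := by nlinarith
  obtain ⟨d, rfl⟩ : ∃ d, R = M + d := ⟨R - M, by omega⟩
  have hd2 : d ≤ 2 := by nlinarith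
  subst hk
  rcases Nat.eq_zero_or_pos S with h | h
  · rw [if_pos h]
    subst h
    interval_cases d <;> constructor <;> nlinarith
  · rw [if_neg (by omega)]
    have hd1 : d ≤ 1 := by nlinarith
    interval_cases d <;> constructor <;> nlinarith

/-- The quasi-square configuration on `k` cells attains the Harary–Harborth
bound: it induces exactly `⌊2k − 2√k⌋` edges. -/
theorem quasiSquare_attains_bound (k : ℕ) (hk : 1 ≤ k) :
    (quasiSquare k).card = k ∧
    (gridEdges (quasiSquare k) : ℤ) = ⌊2 * (k : ℝ) - 2 * Real.sqrt k⌋ := by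
  set A := quasiSquare k with hA
  set M : ℕ := Nat.sqrt k with hM
  set R : ℕ := k / M with hR
  set S : ℕ := k % M with hSdef
  have hM1 : 1 ≤ M := Nat.one_le_iff_ne_zero.mpr (by
    simp [hM, Nat.sqrt_eq_zero]; omega)
  have hSM : S < M := Nat.mod_lt _ hM1
  have hkMRS : M * R + S = k := Nat.div_add_mod k M
  have hsq1 : M * M ≤ k := by rw [hM, ← pow_two]; exact Nat.sqrt_le' k
  have hsq2 : k < (M + 1) * (M + 1) := by
    have h := Nat.lt_succ_sqrt' k
    rw [Nat.succ_eq_add_one, pow_two] at h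
    rw [hM]; exact h
  have hR1 : 1 ≤ R := by
    rw [hR]; exact Nat.one_le_div_iff hM1 |>.mpr (by nlinarith)
  have hs : (k : ℤ) - (M : ℤ) * (R : ℤ) = (S : ℤ) := by push_cast [← hkMRS]; ring
  have memA : ∀ v : ℤ × ℤ, v ∈ A ↔
      (1 ≤ v.1 ∧ v.1 ≤ (M : ℤ) ∧ 1 ≤ v.2 ∧ v.2 ≤ (R : ℤ)) ∨
      (1 ≤ v.1 ∧ v.1 ≤ (S : ℤ) ∧ v.2 = (R : ℤ) + 1) := by
    intro v
    simp only [hA, quasiSquare, mem_union, mem_product, mem_Icc, mem_singleton, ← hM, ← hR, hs]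
    tauto
  -- cardinality
  have hcard : A.card = k := by
    have : A = (Icc 1 (M : ℤ) ×ˢ Icc 1 (R : ℤ)) ∪ (Icc 1 (S : ℤ) ×ˢ {(R : ℤ) + 1}) := by
      ext v; rw [memA]; simp only [mem_union, mem_product, mem_Icc, mem_singleton]; tauto
    rw [this, card_rect_strip _ _ _ _ (by omega)]
    simp only [Int.toNat_natCast]; omega
  refine ⟨hcard, ?_⟩
  -- edge count
  have hH : A.filter (fun v => (v.1 + 1, v.2) ∈ A)
      = (Icc 1 ((M : ℤ) - 1) ×ˢ Icc 1 (R : ℤ)) ∪ (Icc 1 ((S : ℤ) - 1) ×ˢ {(R : ℤ) + 1}) := by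
    ext v
    simp only [mem_filter, memA, mem_union, mem_product, mem_Icc, mem_singleton]
    constructor
    · rintro ⟨h1, h2⟩; omega
    · intro h; omega
  have hV : A.filter (fun v => (v.1, v.2 + 1) ∈ A)
      = (Icc 1 (M : ℤ) ×ˢ Icc 1 ((R : ℤ) - 1)) ∪ (Icc 1 (S : ℤ) ×ˢ {(R : ℤ)}) := by
    ext v
    simp only [mem_filter, memA, mem_union, mem_product, mem_Icc, mem_singleton]
    constructor
    · rintro ⟨h1, h2⟩; omega
    · intro h; omega
  have t1 : ((M : ℤ) - 1).toNat = M - 1 := by omega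
  have t2 : ((S : ℤ) - 1).toNat = S - 1 := by omega
  have t3 : ((R : ℤ) - 1).toNat = R - 1 := by omega
  have hHc : (A.filter (fun v => (v.1 + 1, v.2) ∈ A)).card = (M - 1) * R + (S - 1) := by
    rw [hH, card_rect_strip _ _ _ _ (by omega), t1, t2, Int.toNat_natCast]
  have hVc : (A.filter (fun v => (v.1, v.2 + 1) ∈ A)).card = M * (R - 1) + S := by
    rw [hV, card_rect_strip _ _ _ _ (by omega), t3, Int.toNat_natCast]; omega
  set c : ℕ := M + R + (if S = 0 then 0 else 1) with hc
  have hE : gridEdges A + c = 2 * k := by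
    rw [gridEdges_eq, hHc, hVc]
    have e1 : (M - 1) * R = M * R - R := by rw [Nat.sub_mul, one_mul]
    have e2 : M * (R - 1) = M * R - M := by rw [Nat.mul_sub, mul_one]
    have e3 : R ≤ M * R := Nat.le_mul_of_pos_left R hM1
    have e4 : M ≤ M * R := Nat.le_mul_of_pos_right M hR1
    rcases Nat.eq_zero_or_pos S with h | h
    · have hcv : c = M + R := by rw [hc, if_pos h, Nat.add_zero]
      omega
    · have hcv : c = M + R + 1 := by rw [hc, if_neg (by omega)]
      omega
  -- the key inequalities
  obtain ⟨key1, key2⟩ := key_ineq k M R S hM1 hSM hkMRS hsq1 hsq2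
  rw [← hc] at key1 key2
  clear_value c
  have hc2 : 2 ≤ c := by omega
  -- real analysis: c - 1 < 2√k ≤ c
  have h2sq : 2 * Real.sqrt k = Real.sqrt (4 * k) := by
    rw [show (4 : ℝ) * k = 2 ^ 2 * k by ring, Real.sqrt_mul (by positivity),
      Real.sqrt_sq (by norm_num)]
  have hub : 2 * Real.sqrt k ≤ c := by
    rw [h2sq]
    calc Real.sqrt (4 * k) ≤ Real.sqrt ((c : ℝ) ^ 2) := by
          apply Real.sqrt_le_sqrt
          exact_mod_cast key2
      _ = c := Real.sqrt_sq (by positivity)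
  have hlb : (c : ℝ) - 1 < 2 * Real.sqrt k := by
    rw [h2sq]
    have h1 : ((c : ℝ) - 1) ^ 2 < 4 * k := by
      have this' : ((c : ℝ)) ^ 2 + 1 < 4 * (k : ℝ) + 2 * (c : ℝ) := by exact_mod_cast key1
      have hc2' : (2 : ℝ) ≤ c := by exact_mod_cast hc2
      have he : ((c : ℝ) - 1) ^ 2 = (c : ℝ) ^ 2 - 2 * c + 1 := by ring
      linarith
    calc (c : ℝ) - 1 = Real.sqrt (((c : ℝ) - 1) ^ 2) := by
          have h1c : (1 : ℝ) ≤ c := by exact_mod_cast (by omega : 1 ≤ c)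
          rw [Real.sqrt_sq (by linarith)]
      _ < Real.sqrt (4 * k) := by
          apply Real.sqrt_lt_sqrt (by positivity) h1
  have hEint : (gridEdges A : ℤ) = 2 * k - c := by
    have h := congrArg (Nat.cast : ℕ → ℤ) hE
    push_cast at h
    linarith
  rw [hEint]
  symm
  rw [Int.floor_eq_iff]
  constructor
  · push_cast; linarith
  · push_cast; linarith
end

section
/- In the 1-dimensional Ising model, any two configurations y, y' with the same sufficient statistics T_1 = a and T_2 = b on a sufficiently long path are connected by a sequence of simple swaps all of whose intermediate configurations also have sufficient statistics (a, b). In other words, the expanded sample space needed for connectivity is S*_1(a,b) = S(a,b). -/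
open Finset

/-- A simple swap on the path `{1,…,n}`: move a single 1 at position `j`
to a position `i` currently holding 0. -/
def SwapStep (n : ℕ) (y y' : ℕ → ℕ) : Prop :=
  ∃ i ∈ Finset.Icc 1 n, ∃ j ∈ Finset.Icc 1 n, y i = 0 ∧ y j = 1 ∧
    y' = Function.update (Function.update y j 0) i 1

/-- One step of the chain inside `S(a,b)`: a simple swap whose result is again a
configuration (boundary zero) with sufficient statistics `(a,b)`. -/
def Step (n a b : ℕ) (y y' : ℕ → ℕ) : Prop :=
  SwapStep n y y' ∧ y' 1 = 0 ∧ y' n = 0 ∧ T1 n y' = a ∧ T2 n y' = b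

namespace IsingAux


def dd (y : ℕ → ℕ) (e : ℕ) : ℕ := if y e = y (e+1) then 0 else 1

lemma T2_eq (n : ℕ) (y : ℕ → ℕ) : T2 n y = ∑ e ∈ Finset.Ico 1 n, dd y e := rfl

def Conf (m n : ℕ) (y : ℕ → ℕ) : Prop :=
  (∀ x, y x ≤ 1) ∧ (∀ x, x ≤ m → y x = 0) ∧ (∀ x, n ≤ x → y x = 0)

def LStep (n : ℕ) (y y' : ℕ → ℕ) : Prop :=
  SwapStep n y y' ∧ y' 1 = 0 ∧ y' n = 0 ∧ T1 n y' = T1 n y ∧ T2 n y' = T2 n y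

def RStep (m n : ℕ) (y y' : ℕ → ℕ) : Prop :=
  LStep n y y' ∧ ∀ x, x ≤ m → y' x = 0

lemma T1_swap (n i j : ℕ) (y : ℕ → ℕ) (hi : i ∈ Finset.Icc 1 n)
    (hj : j ∈ Finset.Icc 1 n) (hij : i ≠ j) (hyi : y i = 0) (hyj : y j = 1) :
    T1 n (Function.update (Function.update y j 0) i 1) = T1 n y := by
  unfold T1
  rw [Finset.sum_update_of_mem hi]
  have hj' : j ∈ Finset.Icc 1 n \ {i} := by
    simp [Finset.mem_sdiff, hj, Ne.symm hij]
  rw [Finset.sum_update_of_mem hj']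
  have h1 : ∑ x ∈ Finset.Icc 1 n, y x
      = y i + ∑ x ∈ Finset.Icc 1 n \ {i}, y x := by
    rw [← Finset.sum_inter_add_sum_sdiff (Finset.Icc 1 n) {i} y]
    have : Finset.Icc 1 n ∩ {i} = {i} := by
      rw [Finset.inter_eq_right]; simpa using hi
    rw [this, Finset.sum_singleton]
  have h2 : ∑ x ∈ Finset.Icc 1 n \ {i}, y x
      = y j + ∑ x ∈ (Finset.Icc 1 n \ {i}) \ {j}, y x := by
    rw [← Finset.sum_inter_add_sum_sdiff (Finset.Icc 1 n \ {i}) {j} y]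
    have : (Finset.Icc 1 n \ {i}) ∩ {j} = {j} := by
      rw [Finset.inter_eq_right]; simpa using hj'
    rw [this, Finset.sum_singleton]
  rw [h1, h2, hyi, hyj]
  ring

lemma sum_dd_split (n : ℕ) (y : ℕ → ℕ) (D : Finset ℕ) (hD : D ⊆ Finset.Ico 1 n) :
    T2 n y = ∑ e ∈ D, dd y e + ∑ e ∈ Finset.Ico 1 n \ D, dd y e := by
  rw [T2_eq, ← Finset.sum_inter_add_sum_sdiff (Finset.Ico 1 n) D (dd y)]
  congr 1
  rw [Finset.inter_eq_right.mpr hD]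

lemma T2_eq_of (n : ℕ) (y y' : ℕ → ℕ) (D : Finset ℕ) (hD : D ⊆ Finset.Ico 1 n)
    (hout : ∀ e ∈ Finset.Ico 1 n \ D, dd y' e = dd y e)
    (hin : ∑ e ∈ D, dd y' e = ∑ e ∈ D, dd y e) : T2 n y' = T2 n y := by
  rw [sum_dd_split n y D hD, sum_dd_split n y' D hD, hin,
    Finset.sum_congr rfl hout]



/-- Packaging: given all side conditions and T2 preservation, produce a step. -/
lemma mk_move (m n i j : ℕ) (y : ℕ → ℕ) (hm : 1 ≤ m)
    (hilo : m + 1 ≤ i) (hihi : i + 1 ≤ n) (hjlo : m + 1 ≤ j) (hjhi : j + 1 ≤ n)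
    (hij : i ≠ j) (hyi : y i = 0) (hyj : y j = 1) (hc : Conf m n y)
    (hT2 : T2 n (Function.update (Function.update y j 0) i 1) = T2 n y) :
    RStep m n y (Function.update (Function.update y j 0) i 1) ∧
      Conf m n (Function.update (Function.update y j 0) i 1) := by
  obtain ⟨hle, hlow, hhigh⟩ := hc
  set y' := Function.update (Function.update y j 0) i 1 with hy'
  have hY : ∀ x, y' x = if x = i then 1 else if x = j then 0 else y x := by
    intro x
    simp [hy', Function.update_apply]
  have hi' : i ∈ Finset.Icc 1 n := by simp; omega
  have hj' : j ∈ Finset.Icc 1 n := by simp; omega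
  have hT1 : T1 n y' = T1 n y := T1_swap n i j y hi' hj' hij hyi hyj
  have hb1 : y' 1 = 0 := by rw [hY]; rw [if_neg (by omega), if_neg (by omega)]; exact hlow 1 hm
  have hbn : y' n = 0 := by rw [hY]; rw [if_neg (by omega), if_neg (by omega)]; exact hhigh n le_rfl
  have hlow' : ∀ x, x ≤ m → y' x = 0 := by
    intro x hx; rw [hY]; rw [if_neg (by omega), if_neg (by omega)]; exact hlow x hx
  refine ⟨⟨⟨⟨i, hi', j, hj', hyi, hyj, hy'⟩, hb1, hbn, hT1, hT2⟩, hlow'⟩, ?_, hlow', ?_⟩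
  · intro x; rw [hY]
    split_ifs with h1 h2
    · exact le_rfl
    · exact Nat.zero_le 1
    · exact hle x
  · intro x hx; rw [hY]; rw [if_neg (by omega), if_neg (by omega)]; exact hhigh x hx



lemma dd_out (y : ℕ → ℕ) (i j e : ℕ) (h1 : e ≠ i) (h2 : e ≠ j)
    (h3 : e + 1 ≠ i) (h4 : e + 1 ≠ j) :
    dd (Function.update (Function.update y j 0) i 1) e = dd y e := by
  unfold dd
  simp [Function.update_apply, h1, h2, h3, h4]

lemma sum3 (g : ℕ → ℕ) (t : ℕ) :
    ∑ e ∈ ({t, t+1, t+2} : Finset ℕ), g e = g t + g (t+1) + g (t+2) := by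
  rw [Finset.sum_insert (by simp only [Finset.mem_insert, Finset.mem_singleton]; omega),
    Finset.sum_insert (by simp only [Finset.mem_singleton]; omega),
    Finset.sum_singleton, add_assoc]

/-- Move 1: slide an isolated 1 at `t+2` one step left to `t+1`. -/
lemma move1 (m n t : ℕ) (y : ℕ → ℕ) (hm : 1 ≤ m) (hmt : m ≤ t) (htn : t + 3 ≤ n)
    (h0 : y t = 0) (h1 : y (t+1) = 0) (h2 : y (t+2) = 1) (h3 : y (t+3) = 0)
    (hc : Conf m n y) :
    RStep m n y (Function.update (Function.update y (t+2) 0) (t+1) 1) ∧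
      Conf m n (Function.update (Function.update y (t+2) 0) (t+1) 1) := by
  set y' := Function.update (Function.update y (t+2) 0) (t+1) 1 with hy'
  have hv : ∀ x, y' x = if x = t+1 then 1 else if x = t+2 then 0 else y x := by
    intro x; simp [hy', Function.update_apply]
  have w0 : y' t = 0 := by rw [hv]; rw [if_neg (by omega), if_neg (by omega)]; exact h0
  have w1 : y' (t+1) = 1 := by rw [hv]; rw [if_pos rfl]
  have w2 : y' (t+2) = 0 := by rw [hv]; rw [if_neg (by omega), if_pos rfl]
  have w3 : y' (t+3) = 0 := by rw [hv]; rw [if_neg (by omega), if_neg (by omega)]; exact h3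
  have hT2 : T2 n y' = T2 n y := by
    apply T2_eq_of n y y' ({t, t+1, t+2} : Finset ℕ)
    · intro e he
      simp only [Finset.mem_insert, Finset.mem_singleton, Finset.mem_Ico] at he ⊢
      omega
    · intro e he
      simp only [Finset.mem_sdiff, Finset.mem_Ico, Finset.mem_insert,
        Finset.mem_singleton] at he
      exact dd_out y (t+1) (t+2) e (by omega) (by omega) (by omega) (by omega)
    · rw [sum3, sum3]
      simp only [dd, show t+1+1 = t+2 from rfl, show t+2+1 = t+3 from rfl]
      rw [w0, w1, w2, w3, h0, h1, h2, h3]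
      norm_num
  exact mk_move m n (t+1) (t+2) y hm (by omega) (by omega) (by omega) (by omega)
    (by omega) h1 h2 hc hT2


lemma sum4 (g : ℕ → ℕ) (a b c d : ℕ) (hab : a < b) (hbc : b < c) (hcd : c < d) :
    ∑ e ∈ ({a, b, c, d} : Finset ℕ), g e = g a + g b + g c + g d := by
  rw [Finset.sum_insert (by simp only [Finset.mem_insert, Finset.mem_singleton]; omega),
    Finset.sum_insert (by simp only [Finset.mem_insert, Finset.mem_singleton]; omega),
    Finset.sum_insert (by simp only [Finset.mem_singleton]; omega),
    Finset.sum_singleton, add_assoc, add_assoc]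

/-- Move 2: slide a block `[t+2, t+s+3]` one step left (move its right end to `t+1`). -/
lemma move2 (m n t s : ℕ) (y : ℕ → ℕ) (hm : 1 ≤ m) (hmt : m ≤ t) (htn : t + s + 4 ≤ n)
    (h0 : y t = 0) (h1 : y (t+1) = 0) (h2 : y (t+2) = 1)
    (hq1 : y (t+s+2) = 1) (hq : y (t+s+3) = 1) (hq2 : y (t+s+4) = 0)
    (hc : Conf m n y) :
    RStep m n y (Function.update (Function.update y (t+s+3) 0) (t+1) 1) ∧
      Conf m n (Function.update (Function.update y (t+s+3) 0) (t+1) 1) := by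
  set y' := Function.update (Function.update y (t+s+3) 0) (t+1) 1 with hy'
  have hv : ∀ x, y' x = if x = t+1 then 1 else if x = t+s+3 then 0 else y x := by
    intro x; simp [hy', Function.update_apply]
  have w0 : y' t = 0 := by rw [hv]; rw [if_neg (by omega), if_neg (by omega)]; exact h0
  have w1 : y' (t+1) = 1 := by rw [hv]; rw [if_pos rfl]
  have w2 : y' (t+2) = 1 := by rw [hv]; rw [if_neg (by omega), if_neg (by omega)]; exact h2
  have wq1 : y' (t+s+2) = 1 := by rw [hv]; rw [if_neg (by omega), if_neg (by omega)]; exact hq1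
  have wq : y' (t+s+3) = 0 := by rw [hv]; rw [if_neg (by omega), if_pos rfl]
  have wq2 : y' (t+s+4) = 0 := by rw [hv]; rw [if_neg (by omega), if_neg (by omega)]; exact hq2
  have hT2 : T2 n y' = T2 n y := by
    apply T2_eq_of n y y' ({t, t+1, t+s+2, t+s+3} : Finset ℕ)
    · intro e he
      simp only [Finset.mem_insert, Finset.mem_singleton, Finset.mem_Ico] at he ⊢
      omega
    · intro e he
      simp only [Finset.mem_sdiff, Finset.mem_Ico, Finset.mem_insert,
        Finset.mem_singleton] at he
      exact dd_out y (t+1) (t+s+3) e (by omega) (by omega) (by omega) (by omega)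
    · rw [sum4 _ _ _ _ _ (by omega) (by omega) (by omega),
        sum4 _ _ _ _ _ (by omega) (by omega) (by omega)]
      simp only [dd, show t+1+1 = t+2 from rfl, show t+s+2+1 = t+s+3 from rfl,
        show t+s+3+1 = t+s+4 from rfl]
      rw [w0, w1, w2, wq1, wq, wq2, h0, h1, h2, hq1, hq, hq2]
      norm_num
  exact mk_move m n (t+1) (t+s+3) y hm (by omega) (by omega) (by omega) (by omega)
    (by omega) h1 hq hc hT2

/-- Move 3: donate the right end `t+1` of a block across a gap of size 1 to `t+2`. -/
lemma move3 (m n t : ℕ) (y : ℕ → ℕ) (hm : 1 ≤ m) (hmt : m + 1 ≤ t) (htn : t + 3 ≤ n)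
    (h0 : y t = 1) (h1 : y (t+1) = 1) (h2 : y (t+2) = 0) (h3 : y (t+3) = 1)
    (hc : Conf m n y) :
    RStep m n y (Function.update (Function.update y (t+1) 0) (t+2) 1) ∧
      Conf m n (Function.update (Function.update y (t+1) 0) (t+2) 1) := by
  set y' := Function.update (Function.update y (t+1) 0) (t+2) 1 with hy'
  have hv : ∀ x, y' x = if x = t+2 then 1 else if x = t+1 then 0 else y x := by
    intro x; simp [hy', Function.update_apply]
  have w0 : y' t = 1 := by rw [hv]; rw [if_neg (by omega), if_neg (by omega)]; exact h0
  have w1 : y' (t+1) = 0 := by rw [hv]; rw [if_neg (by omega), if_pos rfl]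
  have w2 : y' (t+2) = 1 := by rw [hv]; rw [if_pos rfl]
  have w3 : y' (t+3) = 1 := by rw [hv]; rw [if_neg (by omega), if_neg (by omega)]; exact h3
  have hT2 : T2 n y' = T2 n y := by
    apply T2_eq_of n y y' ({t, t+1, t+2} : Finset ℕ)
    · intro e he
      simp only [Finset.mem_insert, Finset.mem_singleton, Finset.mem_Ico] at he ⊢
      omega
    · intro e he
      simp only [Finset.mem_sdiff, Finset.mem_Ico, Finset.mem_insert,
        Finset.mem_singleton] at he
      exact dd_out y (t+2) (t+1) e (by omega) (by omega) (by omega) (by omega)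
    · rw [sum3, sum3]
      simp only [dd, show t+1+1 = t+2 from rfl, show t+2+1 = t+3 from rfl]
      rw [w0, w1, w2, w3, h0, h1, h2, h3]
      norm_num
  exact mk_move m n (t+2) (t+1) y hm (by omega) (by omega) (by omega) (by omega)
    (by omega) h2 h1 hc hT2

/-- Move 4: donate the right end `t+1` of a block to position `t+3+s` which sits
just to the left of a 1 at `t+4+s`. -/
lemma move4 (m n t s : ℕ) (y : ℕ → ℕ) (hm : 1 ≤ m) (hmt : m + 1 ≤ t) (htn : t + s + 4 ≤ n)
    (h0 : y t = 1) (h1 : y (t+1) = 1) (h2 : y (t+2) = 0)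
    (hr1 : y (t+s+2) = 0) (hr : y (t+s+3) = 0) (hr2 : y (t+s+4) = 1)
    (hc : Conf m n y) :
    RStep m n y (Function.update (Function.update y (t+1) 0) (t+s+3) 1) ∧
      Conf m n (Function.update (Function.update y (t+1) 0) (t+s+3) 1) := by
  set y' := Function.update (Function.update y (t+1) 0) (t+s+3) 1 with hy'
  have hv : ∀ x, y' x = if x = t+s+3 then 1 else if x = t+1 then 0 else y x := by
    intro x; simp [hy', Function.update_apply]
  have w0 : y' t = 1 := by rw [hv]; rw [if_neg (by omega), if_neg (by omega)]; exact h0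
  have w1 : y' (t+1) = 0 := by rw [hv]; rw [if_neg (by omega), if_pos rfl]
  have w2 : y' (t+2) = 0 := by rw [hv]; rw [if_neg (by omega), if_neg (by omega)]; exact h2
  have wr1 : y' (t+s+2) = 0 := by rw [hv]; rw [if_neg (by omega), if_neg (by omega)]; exact hr1
  have wr : y' (t+s+3) = 1 := by rw [hv]; rw [if_pos rfl]
  have wr2 : y' (t+s+4) = 1 := by rw [hv]; rw [if_neg (by omega), if_neg (by omega)]; exact hr2
  have hT2 : T2 n y' = T2 n y := by
    apply T2_eq_of n y y' ({t, t+1, t+s+2, t+s+3} : Finset ℕ)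
    · intro e he
      simp only [Finset.mem_insert, Finset.mem_singleton, Finset.mem_Ico] at he ⊢
      omega
    · intro e he
      simp only [Finset.mem_sdiff, Finset.mem_Ico, Finset.mem_insert,
        Finset.mem_singleton] at he
      exact dd_out y (t+s+3) (t+1) e (by omega) (by omega) (by omega) (by omega)
    · rw [sum4 _ _ _ _ _ (by omega) (by omega) (by omega),
        sum4 _ _ _ _ _ (by omega) (by omega) (by omega)]
      simp only [dd, show t+1+1 = t+2 from rfl, show t+s+2+1 = t+s+3 from rfl,
        show t+s+3+1 = t+s+4 from rfl]
      rw [w0, w1, w2, wr1, wr, wr2, h0, h1, h2, hr1, hr, hr2]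
      norm_num
  exact mk_move m n (t+s+3) (t+1) y hm (by omega) (by omega) (by omega) (by omega)
    (by omega) hr h1 hc hT2


/-- If `u p = 1` and no zero occurs strictly before `q+1` (after `p`), then `u`
is `1` on all of `[p, q]`. -/
lemma fill (u : ℕ → ℕ) (hle : ∀ x, u x ≤ 1) (p q : ℕ) (hp : u p = 1)
    (hmin : ∀ e, p ≤ e → e < q → u (e+1) ≠ 0) :
    ∀ x, p ≤ x → x ≤ q → u x = 1 := by
  intro x hpx hxq
  induction x using Nat.strong_induction_on with
  | _ x ih =>
    rcases Nat.eq_or_lt_of_le hpx with h | h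
    · exact h ▸ hp
    · obtain ⟨e, rfl⟩ : ∃ e, x = e + 1 := ⟨x - 1, by omega⟩
      have hne := hmin e (by omega) (by omega)
      have := hle (e+1)
      omega

/-- A configuration with `T2 = 0` that vanishes on `[0, m]` and `[n, ∞)` is zero. -/
lemma zero_of_T2_zero (m n : ℕ) (u : ℕ → ℕ) (hm : 1 ≤ m)
    (hlow : ∀ x, x ≤ m → u x = 0) (hhigh : ∀ x, n ≤ x → u x = 0)
    (hT2 : T2 n u = 0) : ∀ x, u x = 0 := by
  have hdd : ∀ e ∈ Finset.Ico 1 n, dd u e = 0 := by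
    rw [T2_eq] at hT2
    exact Finset.sum_eq_zero_iff.mp hT2
  intro x
  induction x using Nat.strong_induction_on with
  | _ x ih =>
    by_cases hx : x ≤ m
    · exact hlow x hx
    by_cases hx' : n ≤ x
    · exact hhigh x hx'
    obtain ⟨e, rfl⟩ : ∃ e, x = e + 1 := ⟨x - 1, by omega⟩
    have h1 : dd u e = 0 := hdd e (by simp [Finset.mem_Ico]; omega)
    have h2 : u e = 0 := ih e (by omega)
    unfold dd at h1
    split at h1 <;> omega

/-- T1 of an interval configuration. -/
lemma t1_interval (n m q : ℕ) (w : ℕ → ℕ) (hm : 1 ≤ m) (hq : m + 1 ≤ q) (hqn : q + 1 ≤ n)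
    (hw : ∀ x, w x = if m + 1 ≤ x ∧ x ≤ q then 1 else 0) :
    T1 n w = q - m := by
  unfold T1
  rw [Finset.sum_congr rfl (fun x _ => hw x), Finset.sum_boole]
  have : Finset.filter (fun x => m + 1 ≤ x ∧ x ≤ q) (Finset.Icc 1 n) = Finset.Icc (m+1) q := by
    ext x
    simp only [Finset.mem_filter, Finset.mem_Icc]
    omega
  rw [this]
  simp [Nat.card_Icc]

/-- T2 of an interval configuration is 2. -/
lemma t2_interval (n m q : ℕ) (w : ℕ → ℕ) (hm : 1 ≤ m) (hq : m + 1 ≤ q) (hqn : q + 1 ≤ n)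
    (hw : ∀ x, w x = if m + 1 ≤ x ∧ x ≤ q then 1 else 0) :
    T2 n w = 2 := by
  rw [T2_eq]
  have hpt : ∀ e, dd w e = (if e = m then 1 else 0) + (if e = q then 1 else 0) := by
    intro e
    unfold dd
    rw [hw e, hw (e+1)]
    split_ifs <;> first | exact absurd rfl (by assumption) | exact (‹False›).elim | omega
  rw [Finset.sum_congr rfl (fun e _ => hpt e), Finset.sum_add_distrib]
  rw [Finset.sum_ite_eq' (Finset.Ico 1 n) m (fun _ => 1),
    Finset.sum_ite_eq' (Finset.Ico 1 n) q (fun _ => 1)]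
  rw [if_pos (by simp [Finset.mem_Ico]; omega), if_pos (by simp [Finset.mem_Ico]; omega)]

/-- T2 is even for a boundary-zero configuration with values ≤ 1. -/
lemma t2_even (n : ℕ) (u : ℕ → ℕ) (hn : 1 ≤ n) (h1 : u 1 = 0) (hnn : u n = 0)
    (hle : ∀ x, u x ≤ 1) : Even (T2 n u) := by
  classical
  set R : ℕ := ∑ e ∈ Finset.Ico 1 n, (if u e = 0 ∧ u (e+1) = 1 then 1 else 0) with hR
  set F : ℕ := ∑ e ∈ Finset.Ico 1 n, (if u e = 1 ∧ u (e+1) = 0 then 1 else 0) with hF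
  have hTRF : T2 n u = R + F := by
    rw [T2_eq, hR, hF, ← Finset.sum_add_distrib]
    refine Finset.sum_congr rfl fun e _ => ?_
    unfold dd
    have := hle e; have := hle (e+1)
    split_ifs <;> omega
  have htel : ∑ e ∈ Finset.Ico 1 n, ((u (e+1) : ℤ) - (u e : ℤ)) = 0 := by
    have h2 : ∑ i ∈ Finset.range (n-1), ((u (i+1+1) : ℤ) - (u (i+1) : ℤ))
        = (u (n-1+1) : ℤ) - (u (0+1) : ℤ) :=
      Finset.sum_range_sub (fun i => (u (i+1) : ℤ)) (n-1)
    rw [Finset.sum_Ico_eq_sum_range,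
      Finset.sum_congr rfl (fun k _ => by rw [add_comm 1 k]), h2,
      show n - 1 + 1 = n from by omega]
    simp [h1, hnn]
  have hRF : (R : ℤ) - (F : ℤ) = 0 := by
    rw [hR, hF]
    push_cast
    rw [← Finset.sum_sub_distrib, ← htel]
    refine Finset.sum_congr rfl fun e _ => ?_
    have := hle e; have := hle (e+1)
    split_ifs <;> push_cast <;> omega
  have : R = F := by omega
  exact ⟨R, by omega⟩


lemma t1_split_single (m n : ℕ) (u : ℕ → ℕ) (hmn : m + 1 ≤ n) :
    T1 n (fun x => (if x = m+1 then 1 else 0) + u x) = 1 + T1 n u := by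
  unfold T1
  rw [Finset.sum_add_distrib]
  congr 1
  rw [Finset.sum_ite_eq' (Finset.Icc 1 n) (m+1) (fun _ => 1)]
  rw [if_pos (by simp [Finset.mem_Icc]; omega)]

lemma t2_split_single (m n : ℕ) (u : ℕ → ℕ) (hm : 1 ≤ m) (hmn : m + 2 ≤ n)
    (hu : ∀ x, x ≤ m + 2 → u x = 0) :
    T2 n (fun x => (if x = m+1 then 1 else 0) + u x) = 2 + T2 n u := by
  have hsplit : ∀ g : ℕ → ℕ, ∑ e ∈ Finset.Ico 1 n, g e
      = ∑ e ∈ Finset.Ico 1 (m+2), g e + ∑ e ∈ Finset.Ico (m+2) n, g e := by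
    intro g
    rw [Finset.sum_Ico_consecutive _ (by omega) (by omega)]
  rw [T2_eq, T2_eq, hsplit, hsplit]
  have hA : ∀ e ∈ Finset.Ico 1 (m+2),
      dd (fun x => (if x = m+1 then 1 else 0) + u x) e
        = (if e = m then 1 else 0) + (if e = m+1 then 1 else 0) := by
    intro e he
    simp only [Finset.mem_Ico] at he
    have h1 : u e = 0 := hu e (by omega)
    have h2 : u (e+1) = 0 := hu (e+1) (by omega)
    simp only [dd, h1, h2]
    split_ifs <;> first | exact absurd rfl (by assumption) | exact (‹False›).elim | omega
  have hB : ∀ e ∈ Finset.Ico (m+2) n,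
      dd (fun x => (if x = m+1 then 1 else 0) + u x) e = dd u e := by
    intro e he
    simp only [Finset.mem_Ico] at he
    simp only [dd]
    have e1 : (if e = m+1 then (1:ℕ) else 0) = 0 := if_neg (by omega)
    have e2 : (if e + 1 = m+1 then (1:ℕ) else 0) = 0 := if_neg (by omega)
    simp only [e1, e2, zero_add]
  have hC : ∀ e ∈ Finset.Ico 1 (m+2), dd u e = 0 := by
    intro e he
    simp only [Finset.mem_Ico] at he
    simp only [dd, hu e (by omega), hu (e+1) (by omega)]
    simp
  rw [Finset.sum_congr rfl hA, Finset.sum_congr rfl hB,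
    Finset.sum_congr rfl hC, Finset.sum_add_distrib,
    Finset.sum_ite_eq' (Finset.Ico 1 (m+2)) m (fun _ => 1),
    Finset.sum_ite_eq' (Finset.Ico 1 (m+2)) (m+1) (fun _ => 1),
    if_pos (by simp only [Finset.mem_Ico]; omega), if_pos (by simp only [Finset.mem_Ico]; omega)]
  simp

lemma lift (m n : ℕ) (hm : 1 ≤ m) (hmn : m + 3 ≤ n) (c : ℕ → ℕ)
    (hcl : ∀ x, x ≤ m + 2 → c x = 0) (u : ℕ → ℕ)
    (hru : Relation.ReflTransGen (RStep (m+2) n) u c) :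
    (∀ x, x ≤ m + 2 → u x = 0) →
      Relation.ReflTransGen (RStep m n) (fun x => (if x = m+1 then 1 else 0) + u x)
        (fun x => (if x = m+1 then 1 else 0) + c x) := by
  induction hru using Relation.ReflTransGen.head_induction_on with
  | refl => intro _; exact .refl
  | @head u₁ v hstep hrest ih =>
    intro hu
    have hlowv : ∀ x, x ≤ m + 2 → v x = 0 := hstep.2
    obtain ⟨⟨⟨i, hi, j, hj, hui, huj, hveq⟩, hv1, hvn, hT1, hT2⟩, _⟩ := hstep
    simp only [Finset.mem_Icc] at hi hj
    have hj3 : m + 3 ≤ j := by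
      by_contra h
      have := hu j (by omega); omega
    have hi3 : m + 3 ≤ i := by
      by_contra h
      have h2 : v i = 1 := by rw [hveq]; simp
      have := hlowv i (by omega); omega
    have hswap : (fun x => (if x = m+1 then 1 else 0) + v x)
        = Function.update (Function.update (fun x => (if x = m+1 then 1 else 0) + u₁ x) j 0) i 1 := by
      funext x
      rw [hveq]
      simp only [Function.update_apply]
      split_ifs <;> first | rfl | omega | exact (‹False›).elim
    have hstep' : RStep m n (fun x => (if x = m+1 then 1 else 0) + u₁ x)
        (fun x => (if x = m+1 then 1 else 0) + v x) := by
      refine ⟨⟨⟨i, by simp [Finset.mem_Icc]; omega, j, by simp [Finset.mem_Icc]; omega,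
        ?_, ?_, hswap⟩, ?_, ?_, ?_, ?_⟩, ?_⟩
      · simp only []; rw [if_neg (by omega), hui]
      · simp only []; rw [if_neg (by omega), huj]
      · simp only []; rw [if_neg (by omega), hv1]
      · simp only []; rw [if_neg (by omega), hvn]
      · rw [t1_split_single m n v (by omega), t1_split_single m n u₁ (by omega), hT1]
      · rw [t2_split_single m n v hm (by omega) hlowv,
          t2_split_single m n u₁ hm (by omega) hu, hT2]
      · intro x hx
        simp only []
        rw [if_neg (by omega), hlowv x (by omega)]
    exact Relation.ReflTransGen.head hstep' (ih hlowv)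


/-- Phase A: bring the leftmost 1 to position `m+1`. -/
lemma flush (n m : ℕ) (hm : 1 ≤ m) :
    ∀ p u, Conf m n u → u p = 1 → (∀ x, x < p → u x = 0) →
    ∃ w, Relation.ReflTransGen (RStep m n) u w ∧ Conf m n w ∧ w (m+1) = 1 ∧
      T1 n w = T1 n u ∧ T2 n w = T2 n u := by
  intro p
  induction p using Nat.strong_induction_on with
  | _ p ih =>
    intro u hc hup hbelow
    obtain ⟨hle, hlow, hhigh⟩ := hc
    have hpm : m + 1 ≤ p := by
      by_contra h
      have := hlow p (by omega); omega
    have hpn : p + 1 ≤ n := by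
      by_contra h
      have := hhigh p (by omega); omega
    by_cases hpe : p = m + 1
    · exact ⟨u, .refl, ⟨hle, hlow, hhigh⟩, by rw [← hpe]; exact hup, rfl, rfl⟩
    · -- p ≥ m + 2
      have hpm2 : m + 2 ≤ p := by omega
      classical
      have hqex : ∃ e, p ≤ e ∧ u (e+1) = 0 := ⟨n, by omega, hhigh (n+1) (by omega)⟩
      obtain ⟨q, ⟨hpq, hq0⟩, hqmin⟩ :
          ∃ q, (p ≤ q ∧ u (q+1) = 0) ∧ ∀ e, e < q → ¬(p ≤ e ∧ u (e+1) = 0) :=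
        ⟨Nat.find hqex, Nat.find_spec hqex, fun e he => Nat.find_min hqex he⟩
      have hqn : q + 1 ≤ n := by
        by_contra h
        exact hqmin (n-1) (by omega) ⟨by omega,
          by rw [show n-1+1 = n from by omega]; exact hhigh n le_rfl⟩
      have hfill : ∀ x, p ≤ x → x ≤ q → u x = 1 :=
        fill u hle p q hup (fun e he1 he2 h0 => hqmin e he2 ⟨he1, h0⟩)
      obtain ⟨t, rfl⟩ : ∃ t, p = t + 2 := ⟨p - 2, by omega⟩
      have h0 : u t = 0 := hbelow t (by omega)
      have h1 : u (t+1) = 0 := hbelow (t+1) (by omega)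
      by_cases hqp : q = t + 2
      · -- singleton slide
        have h3 : u (t+3) = 0 := by rw [show t+3 = q+1 from by omega]; exact hq0
        obtain ⟨hstep, hconf2⟩ := move1 m n t u hm (by omega) (by omega) h0 h1 hup h3
          ⟨hle, hlow, hhigh⟩
        set y2 := Function.update (Function.update u (t+2) 0) (t+1) 1 with hy2
        have hy2v : ∀ x, y2 x = if x = t+1 then 1 else if x = t+2 then 0 else u x := by
          intro x; simp [hy2, Function.update_apply]
        have h2up : y2 (t+1) = 1 := by rw [hy2v]; simp
        have h2below : ∀ x, x < t+1 → y2 x = 0 := by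
          intro x hx
          rw [hy2v, if_neg (by omega), if_neg (by omega)]
          exact hbelow x (by omega)
        obtain ⟨w, hrtg, hcw, hw1, hwT1, hwT2⟩ := ih (t+1) (by omega) y2 hconf2 h2up h2below
        refine ⟨w, Relation.ReflTransGen.head hstep hrtg, hcw, hw1, ?_, ?_⟩
        · rw [hwT1, hstep.1.2.2.2.1]
        · rw [hwT2, hstep.1.2.2.2.2]
      · -- block slide
        obtain ⟨s, rfl⟩ : ∃ s, q = t + 3 + s := ⟨q - (t+3), by omega⟩
        have hq1 : u (t+s+2) = 1 := hfill (t+s+2) (by omega) (by omega)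
        have hqv : u (t+s+3) = 1 := hfill (t+s+3) (by omega) (by omega)
        have hq2 : u (t+s+4) = 0 := by
          rw [show t+s+4 = (t+3+s)+1 from by omega]; exact hq0
        obtain ⟨hstep, hconf2⟩ := move2 m n t s u hm (by omega) (by omega) h0 h1 hup
          hq1 hqv hq2 ⟨hle, hlow, hhigh⟩
        set y2 := Function.update (Function.update u (t+s+3) 0) (t+1) 1 with hy2
        have hy2v : ∀ x, y2 x = if x = t+1 then 1 else if x = t+s+3 then 0 else u x := by
          intro x; simp [hy2, Function.update_apply]
        have h2up : y2 (t+1) = 1 := by rw [hy2v]; simp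
        have h2below : ∀ x, x < t+1 → y2 x = 0 := by
          intro x hx
          rw [hy2v, if_neg (by omega), if_neg (by omega)]
          exact hbelow x (by omega)
        obtain ⟨w, hrtg, hcw, hw1, hwT1, hwT2⟩ := ih (t+1) (by omega) y2 hconf2 h2up h2below
        refine ⟨w, Relation.ReflTransGen.head hstep hrtg, hcw, hw1, ?_, ?_⟩
        · rw [hwT1, hstep.1.2.2.2.1]
        · rw [hwT2, hstep.1.2.2.2.2]

/-- Phase B: given the configuration is 1 on `[m+1, q]`, 0 at `q+1`, and has a 1
beyond `q`, shrink the first block to the single point `m+1`. -/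
lemma shrink (n m : ℕ) (hm : 1 ≤ m) :
    ∀ q u, Conf m n u → (∀ x, m + 1 ≤ x → x ≤ q → u x = 1) → u (q+1) = 0 →
      (∃ z, q < z ∧ u z = 1) → m + 1 ≤ q →
    ∃ w, Relation.ReflTransGen (RStep m n) u w ∧ Conf m n w ∧ w (m+1) = 1 ∧
      w (m+2) = 0 ∧ (∃ z, m + 3 ≤ z ∧ w z = 1) ∧
      T1 n w = T1 n u ∧ T2 n w = T2 n u := by
  intro q
  induction q using Nat.strong_induction_on with
  | _ q ih =>
    intro u hc hfillq hq0 hbeyond hmq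
    obtain ⟨hle, hlow, hhigh⟩ := hc
    by_cases hqe : q = m + 1
    · refine ⟨u, .refl, ⟨hle, hlow, hhigh⟩, hfillq (m+1) le_rfl (by omega), ?_, ?_, rfl, rfl⟩
      · rw [show m+2 = q+1 from by omega]; exact hq0
      · obtain ⟨z, hz1, hz2⟩ := hbeyond
        refine ⟨z, ?_, hz2⟩
        rcases Nat.lt_or_ge z (m+3) with h | h
        · have : z = m + 2 := by omega
          rw [this] at hz2
          rw [show m+2 = q+1 from by omega] at hz2
          omega
        · omega
    · -- q ≥ m + 2
      have hqm2 : m + 2 ≤ q := by omega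
      classical
      obtain ⟨p2, ⟨hqp2, hup2⟩, hp2min⟩ :
          ∃ p2, (q < p2 ∧ u p2 = 1) ∧ ∀ x, x < p2 → ¬(q < x ∧ u x = 1) :=
        ⟨Nat.find hbeyond, Nat.find_spec hbeyond, fun x hx => Nat.find_min hbeyond hx⟩
      have hgap : ∀ x, q < x → x < p2 → u x = 0 := by
        intro x h1 h2
        have := hp2min x h2
        have := hle x
        omega
      have hp2q : q + 2 ≤ p2 := by
        rcases Nat.lt_or_ge p2 (q+2) with h | h
        · have : p2 = q + 1 := by omega
          rw [this] at hup2; omega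
        · omega
      have hp2n : p2 < n := by
        by_contra h
        have := hhigh p2 (by omega); omega
      obtain ⟨t, rfl⟩ : ∃ t, q = t + 1 := ⟨q - 1, by omega⟩
      have h0 : u t = 1 := hfillq t (by omega) (by omega)
      have h1 : u (t+1) = 1 := hfillq (t+1) (by omega) (by omega)
      have h2 : u (t+2) = 0 := by rw [show t+2 = (t+1)+1 from rfl]; exact hq0
      by_cases hcase : p2 = t + 3
      · -- adjacent donate
        have h3 : u (t+3) = 1 := by rw [← hcase]; exact hup2
        obtain ⟨hstep, hconf2⟩ := move3 m n t u hm (by omega) (by omega) h0 h1 h2 h3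
          ⟨hle, hlow, hhigh⟩
        set y2 := Function.update (Function.update u (t+1) 0) (t+2) 1 with hy2
        have hy2v : ∀ x, y2 x = if x = t+2 then 1 else if x = t+1 then 0 else u x := by
          intro x; simp [hy2, Function.update_apply]
        obtain ⟨w, hrtg, hcw, hw1, hw2, hwbeyond, hwT1, hwT2⟩ := ih t (by omega) y2 hconf2
          (fun x hx1 hx2 => by
            rw [hy2v, if_neg (by omega), if_neg (by omega)]
            exact hfillq x hx1 (by omega))
          (by rw [hy2v, if_neg (by omega), if_pos rfl])
          ⟨t+2, by omega, by rw [hy2v, if_pos rfl]⟩ (by omega)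
        refine ⟨w, Relation.ReflTransGen.head hstep hrtg, hcw, hw1, hw2, hwbeyond, ?_, ?_⟩
        · rw [hwT1, hstep.1.2.2.2.1]
        · rw [hwT2, hstep.1.2.2.2.2]
      · -- far donate
        obtain ⟨s, hs⟩ : ∃ s, p2 = t + s + 4 := ⟨p2 - (t+4), by omega⟩
        have hr1 : u (t+s+2) = 0 := by
          rcases Nat.eq_or_lt_of_le (show 0 ≤ s from Nat.zero_le s) with h | h
          · rw [← h] at hs ⊢
            exact (by rw [show t+0+2 = t+2 from by omega]; exact h2)
          · exact hgap (t+s+2) (by omega) (by omega)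
        have hr : u (t+s+3) = 0 := hgap (t+s+3) (by omega) (by omega)
        have hr2 : u (t+s+4) = 1 := by rw [← hs]; exact hup2
        obtain ⟨hstep, hconf2⟩ := move4 m n t s u hm (by omega) (by omega) h0 h1 h2
          hr1 hr hr2 ⟨hle, hlow, hhigh⟩
        set y2 := Function.update (Function.update u (t+1) 0) (t+s+3) 1 with hy2
        have hy2v : ∀ x, y2 x = if x = t+s+3 then 1 else if x = t+1 then 0 else u x := by
          intro x; simp [hy2, Function.update_apply]
        obtain ⟨w, hrtg, hcw, hw1, hw2, hwbeyond, hwT1, hwT2⟩ := ih t (by omega) y2 hconf2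
          (fun x hx1 hx2 => by
            rw [hy2v, if_neg (by omega), if_neg (by omega)]
            exact hfillq x hx1 (by omega))
          (by rw [hy2v, if_neg (by omega), if_pos rfl])
          ⟨t+s+3, by omega, by rw [hy2v, if_pos rfl]⟩ (by omega)
        refine ⟨w, Relation.ReflTransGen.head hstep hrtg, hcw, hw1, hw2, hwbeyond, ?_, ?_⟩
        · rw [hwT1, hstep.1.2.2.2.1]
        · rw [hwT2, hstep.1.2.2.2.2]


/-- The canonical configuration with `a` ones and `k` blocks, supported in `[m+1, ∞)`:
`k-1` isolated ones at `m+1, m+3, …`, then a block of `a-k+1` ones. -/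
def canon (m a k : ℕ) : ℕ → ℕ :=
  match k with
  | 0 => fun _ => 0
  | 1 => fun x => if m + 1 ≤ x ∧ x ≤ m + a then 1 else 0
  | (k'+2) => fun x => (if x = m + 1 then 1 else 0) + canon (m+2) (a-1) (k'+1) x

lemma canon_low (k : ℕ) : ∀ m a x, x ≤ m → canon m a k x = 0 := by
  induction k using Nat.strong_induction_on with
  | _ k ihk =>
    rcases k with _ | _ | k'
    · intro m a x hx; rfl
    · intro m a x hx
      show (if m + 1 ≤ x ∧ x ≤ m + a then 1 else 0) = 0
      rw [if_neg (by omega)]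
    · intro m a x hx
      show (if x = m + 1 then 1 else 0) + canon (m+2) (a-1) (k'+1) x = 0
      rw [if_neg (by omega), ihk (k'+1) (by omega) (m+2) (a-1) x (by omega)]

/-- Main lemma: every configuration reaches the canonical one. -/
lemma reach (n : ℕ) :
    ∀ b a m u, 1 ≤ m → m + a + b + 2 ≤ n → Conf m n u →
      T1 n u = a → T2 n u = b →
      Relation.ReflTransGen (RStep m n) u (canon m a (b/2)) := by
  intro b
  induction b using Nat.strong_induction_on with
  | _ b ihb =>
    intro a m u hm hn hc hT1 hT2
    obtain ⟨hle, hlow, hhigh⟩ := hc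
    by_cases hb0 : b = 0
    · subst hb0
      have hz := zero_of_T2_zero m n u hm hlow hhigh hT2
      have hu0 : u = canon m a 0 := funext fun x => hz x
      rw [show (0:ℕ)/2 = 0 from rfl, ← hu0]
    · -- b ≠ 0 : the support is nonempty
      classical
      have hxex : ∃ x, u x = 1 := by
        by_contra h
        push_neg at h
        have hz : ∀ x, u x = 0 := fun x => by have := hle x; have := h x; omega
        have : T2 n u = 0 := by
          rw [T2_eq]
          refine Finset.sum_eq_zero fun e _ => ?_
          simp [dd, hz]
        omega
      obtain ⟨p1, hp1, hp1min⟩ : ∃ p1, u p1 = 1 ∧ ∀ x, x < p1 → ¬(u x = 1) :=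
        ⟨Nat.find hxex, Nat.find_spec hxex, fun x hx => Nat.find_min hxex hx⟩
      have hbelow : ∀ x, x < p1 → u x = 0 := fun x hx => by
        have := hle x; have := hp1min x hx; omega
      obtain ⟨w, hrtgw, hcw, hw1, hwT1, hwT2⟩ :=
        flush n m hm p1 u ⟨hle, hlow, hhigh⟩ hp1 hbelow
      obtain ⟨hlew, hloww, hhighw⟩ := hcw
      have hqex : ∃ e, m + 1 ≤ e ∧ w (e+1) = 0 := ⟨n, by omega, hhighw (n+1) (by omega)⟩
      obtain ⟨q, ⟨hmq, hq0⟩, hqmin⟩ :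
          ∃ q, (m + 1 ≤ q ∧ w (q+1) = 0) ∧ ∀ e, e < q → ¬(m + 1 ≤ e ∧ w (e+1) = 0) :=
        ⟨Nat.find hqex, Nat.find_spec hqex, fun e he => Nat.find_min hqex he⟩
      have hqn : q + 1 ≤ n := by
        by_contra h
        exact hqmin (n-1) (by omega) ⟨by omega,
          by rw [show n-1+1 = n from by omega]; exact hhighw n le_rfl⟩
      have hfillw : ∀ x, m + 1 ≤ x → x ≤ q → w x = 1 :=
        fill w hlew (m+1) q hw1 (fun e he1 he2 h0 => hqmin e he2 ⟨he1, h0⟩)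
      by_cases hbey : ∃ z, q < z ∧ w z = 1
      · -- there is a second block : shrink and recurse
        obtain ⟨w₂, hrtg2, hcw2, hw21, hw22, hwbey2, h2T1, h2T2⟩ :=
          shrink n m hm q w ⟨hlew, hloww, hhighw⟩ hfillw hq0 hbey hmq
        obtain ⟨hlew2, hloww2, hhighw2⟩ := hcw2
        have hv1 : ∀ x, x ≤ m + 2 → x ≠ m + 1 → w₂ x = 0 := by
          intro x hx hne
          rcases Nat.lt_or_ge x (m+1) with h | h
          · exact hloww2 x (by omega)
          · have : x = m + 2 := by omega
            rw [this]; exact hw22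
        have huineq : w₂ = fun x => (if x = m+1 then 1 else 0) +
            (fun x => if x ≤ m + 2 then 0 else w₂ x) x := by
          funext x
          simp only []
          by_cases h1 : x = m + 1
          · subst h1; rw [if_pos rfl, if_pos (by omega), hw21]
          · rw [if_neg h1]
            by_cases h2 : x ≤ m + 2
            · rw [if_pos h2, hv1 x h2 h1]
            · rw [if_neg h2]; omega
        have huinlow : ∀ x, x ≤ m + 2 → (fun x => if x ≤ m + 2 then 0 else w₂ x) x = 0 := by
          intro x hx; simp only []; rw [if_pos hx]
        have huinconf : Conf (m+2) n (fun x => if x ≤ m + 2 then 0 else w₂ x) := by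
          refine ⟨fun x => ?_, huinlow, fun x hx => ?_⟩
          · simp only []; split_ifs
            · exact Nat.zero_le 1
            · exact hlew2 x
          · simp only []; split_ifs with h
            · rfl
            · exact hhighw2 x hx
        have hst1 : T1 n w₂ = 1 + T1 n (fun x => if x ≤ m + 2 then 0 else w₂ x) := by
          have := t1_split_single m n (fun x => if x ≤ m + 2 then 0 else w₂ x) (by omega)
          rw [← huineq] at this
          exact this
        have hst2 : T2 n w₂ = 2 + T2 n (fun x => if x ≤ m + 2 then 0 else w₂ x) := by
          have := t2_split_single m n (fun x => if x ≤ m + 2 then 0 else w₂ x) hm (by omega) huinlow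
          rw [← huineq] at this
          exact this
        have haa : a = 1 + T1 n (fun x => if x ≤ m + 2 then 0 else w₂ x) := by
          rw [← hT1, ← hwT1, ← h2T1]; exact hst1
        have hbb : b = 2 + T2 n (fun x => if x ≤ m + 2 then 0 else w₂ x) := by
          rw [← hT2, ← hwT2, ← h2T2]; exact hst2
        obtain ⟨c, hcb⟩ : Even b := by
          rw [← hT2]
          exact t2_even n u (by omega) (hlow 1 hm) (hhigh n le_rfl) hle
        have hb'pos : 1 ≤ T2 n (fun x => if x ≤ m + 2 then 0 else w₂ x) := by
          by_contra h
          have hb'0 : T2 n (fun x => if x ≤ m + 2 then 0 else w₂ x) = 0 := by omega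
          have hz := zero_of_T2_zero (m+2) n (fun x => if x ≤ m + 2 then 0 else w₂ x)
            (by omega) huinlow (fun x hx => by split_ifs with h'
                                               · rfl
                                               · exact hhighw2 x hx) hb'0
          obtain ⟨z, hz3, hz1⟩ := hwbey2
          have h5 := hz z
          rw [if_neg (by omega)] at h5
          omega
        have hrec := ihb (T2 n (fun x => if x ≤ m + 2 then 0 else w₂ x)) (by omega)
          (T1 n (fun x => if x ≤ m + 2 then 0 else w₂ x)) (m+2)
          (fun x => if x ≤ m + 2 then 0 else w₂ x) (by omega) (by omega) huinconf rfl rfl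
        have hlift := lift m n hm (by omega)
          (canon (m+2) (T1 n (fun x => if x ≤ m + 2 then 0 else w₂ x))
            ((T2 n (fun x => if x ≤ m + 2 then 0 else w₂ x))/2))
          (fun x hx => canon_low _ _ _ x hx) _ hrec huinlow
        have hcanon_eq : canon m a (b/2) = fun x => (if x = m+1 then 1 else 0) +
            canon (m+2) (T1 n (fun x => if x ≤ m + 2 then 0 else w₂ x))
              ((T2 n (fun x => if x ≤ m + 2 then 0 else w₂ x))/2) x := by
          obtain ⟨k', hk⟩ : ∃ k', b/2 = k' + 2 := ⟨b/2 - 2, by omega⟩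
          have e1 : a - 1 = T1 n (fun x => if x ≤ m + 2 then 0 else w₂ x) := by omega
          have e2 : k' + 1 = (T2 n (fun x => if x ≤ m + 2 then 0 else w₂ x))/2 := by omega
          rw [hk]
          show (fun x => (if x = m + 1 then 1 else 0) + canon (m+2) (a-1) (k'+1) x) = _
          rw [e1, e2]
        rw [hcanon_eq]
        refine hrtgw.trans (hrtg2.trans ?_)
        nth_rewrite 1 [huineq]
        exact hlift
      · -- single block : already canonical after flush
        have hwchar : ∀ x, w x = if m + 1 ≤ x ∧ x ≤ q then 1 else 0 := by
          intro x
          by_cases hx : m + 1 ≤ x ∧ x ≤ q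
          · rw [if_pos hx]; exact hfillw x hx.1 hx.2
          · rw [if_neg hx]
            rcases Nat.lt_or_ge x (m+1) with h | h
            · exact hloww x (by omega)
            · have hxq : q < x := by omega
              by_contra hne
              have : w x = 1 := by have := hlew x; omega
              exact hbey ⟨x, hxq, this⟩
        have hqa : a = q - m := by
          have := t1_interval n m q w hm hmq hqn hwchar
          rw [hwT1, hT1] at this
          omega
        have hb2 : b = 2 := by
          have := t2_interval n m q w hm hmq hqn hwchar
          rw [hwT2, hT2] at this
          omega
        have hcanon : canon m a (b/2) = w := by
          rw [show b/2 = 1 from by omega]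
          funext x
          show (if m + 1 ≤ x ∧ x ≤ m + a then 1 else 0) = w x
          rw [hwchar x, show m + a = q from by omega]
        rw [hcanon]
        exact hrtgw

lemma rtg_step_of_rstep (n a b : ℕ) (u c : ℕ → ℕ)
    (h : Relation.ReflTransGen (RStep 1 n) u c) :
    T1 n u = a → T2 n u = b → Relation.ReflTransGen (Step n a b) u c := by
  induction h using Relation.ReflTransGen.head_induction_on with
  | refl => intro _ _; exact .refl
  | @head u₁ v hstep hrest ih =>
    intro h1 h2
    have hT1v : T1 n v = a := by rw [hstep.1.2.2.2.1, h1]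
    have hT2v : T2 n v = b := by rw [hstep.1.2.2.2.2, h2]
    exact Relation.ReflTransGen.head
      ⟨hstep.1.1, hstep.1.2.1, hstep.1.2.2.1, hT1v, hT2v⟩ (ih hT1v hT2v)

lemma step_symm (n a b : ℕ) (u v : ℕ → ℕ) (h : Step n a b u v) (hu1 : u 1 = 0)
    (hun : u n = 0) (hT1 : T1 n u = a) (hT2 : T2 n u = b) : Step n a b v u := by
  obtain ⟨⟨i, hi, j, hj, hui, huj, hveq⟩, hv1, hvn, hvT1, hvT2⟩ := h
  have hij : i ≠ j := by intro he; rw [he] at hui; omega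
  have hvi : v i = 1 := by rw [hveq]; simp
  have hvj : v j = 0 := by
    rw [hveq]
    simp [Function.update_apply, Ne.symm hij]
  have hueq : u = Function.update (Function.update v i 0) j 1 := by
    funext x
    by_cases hx1 : x = j
    · subst hx1; simpa using huj
    · by_cases hx2 : x = i
      · rw [hx2]
        simpa [Function.update_apply, hij] using hui
      · rw [hveq]
        simp [Function.update_apply, hx1, hx2]
  exact ⟨⟨j, hj, i, hi, hvj, hvi, hueq⟩, hu1, hun, hT1, hT2⟩

lemma rtg_S (n a b : ℕ) : ∀ u v : ℕ → ℕ, Relation.ReflTransGen (Step n a b) u v →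
    (u 1 = 0 ∧ u n = 0 ∧ T1 n u = a ∧ T2 n u = b) →
    (v 1 = 0 ∧ v n = 0 ∧ T1 n v = a ∧ T2 n v = b) := by
  intro u v h
  induction h with
  | refl => exact id
  | tail _ hstep ih =>
    intro _
    exact ⟨hstep.2.1, hstep.2.2.1, hstep.2.2.2.1, hstep.2.2.2.2⟩

lemma rtg_symm (n a b : ℕ) : ∀ u v : ℕ → ℕ, Relation.ReflTransGen (Step n a b) u v →
    (u 1 = 0 ∧ u n = 0 ∧ T1 n u = a ∧ T2 n u = b) →
    Relation.ReflTransGen (Step n a b) v u := by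
  intro u v h
  induction h with
  | refl => intro _; exact .refl
  | @tail w v' hrest hstep ih =>
    intro hS
    have hwS := rtg_S n a b u w hrest hS
    exact (Relation.ReflTransGen.single
      (step_symm n a b w v' hstep hwS.1 hwS.2.1 hwS.2.2.1 hwS.2.2.2)).trans (ih hS)

end IsingAux


/-- In the 1-dimensional Ising model, on a sufficiently long path any two
configurations with the same sufficient statistics `(a,b)` are connected by
simple swaps all of whose intermediate configurations lie in `S(a,b)`:
the expanded sample space needed for connectivity is `S*₁(a,b) = S(a,b)`. -/
theorem one_dim_connected_in_S (a b : ℕ) :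
    ∃ n₀ : ℕ, ∀ n, n₀ ≤ n → ∀ y y' : ℕ → ℕ,
      (∀ i, y i ≤ 1) → (∀ i, y' i ≤ 1) →
      (∀ i, i ∉ Finset.Icc 1 n → y i = 0) →
      (∀ i, i ∉ Finset.Icc 1 n → y' i = 0) →
      y 1 = 0 → y n = 0 → y' 1 = 0 → y' n = 0 →
      T1 n y = a → T2 n y = b → T1 n y' = a → T2 n y' = b →
      Relation.ReflTransGen (Step n a b) y y' := by
  refine ⟨a + b + 3, fun n hn y y' hley hley' hout hout' hy1 hyn hy'1 hy'n hT1 hT2 hT1' hT2' => ?_⟩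
  have hclow : ∀ x, x ≤ 1 → y x = 0 := by
    intro x hx
    rcases Nat.lt_or_ge x 1 with h | h
    · exact hout x (by simp [Finset.mem_Icc]; omega)
    · rw [show x = 1 from by omega]; exact hy1
  have hchigh : ∀ x, n ≤ x → y x = 0 := by
    intro x hx
    rcases Nat.eq_or_lt_of_le hx with h | h
    · rw [← h]; exact hyn
    · exact hout x (by simp [Finset.mem_Icc]; omega)
  have hclow' : ∀ x, x ≤ 1 → y' x = 0 := by
    intro x hx
    rcases Nat.lt_or_ge x 1 with h | h
    · exact hout' x (by simp [Finset.mem_Icc]; omega)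
    · rw [show x = 1 from by omega]; exact hy'1
  have hchigh' : ∀ x, n ≤ x → y' x = 0 := by
    intro x hx
    rcases Nat.eq_or_lt_of_le hx with h | h
    · rw [← h]; exact hy'n
    · exact hout' x (by simp [Finset.mem_Icc]; omega)
  have h1 := IsingAux.reach n b a 1 y le_rfl (by omega) ⟨hley, hclow, hchigh⟩ hT1 hT2
  have h2 := IsingAux.reach n b a 1 y' le_rfl (by omega) ⟨hley', hclow', hchigh'⟩ hT1' hT2'
  have r1 := IsingAux.rtg_step_of_rstep n a b y _ h1 hT1 hT2
  have r2 := IsingAux.rtg_step_of_rstep n a b y' _ h2 hT1' hT2'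
  have r2' := IsingAux.rtg_symm n a b y' (IsingAux.canon 1 a (b/2)) r2
    ⟨hy'1, hy'n, hT1', hT2'⟩
  exact r1.trans r2'
end

section
/- In the 1-dimensional Ising model, every configuration y ∈ S(a,b) can be transformed by simple swaps within S(a,b) into the max-singleton configuration consisting of b/2 − 1 singletons and one run of a − b/2 + 1 consecutive ones: if y has components C_1,...,C_ℓ of sizes k_1,...,k_ℓ with ℓ ≥ 2, one can merge C_ℓ into C_{ℓ−1} by simple swaps, each step keeping both T_1 and T_2 fixed. -/
open Finset

lemma swap_move (n a b : ℕ) (y : ℕ → ℕ) (hle : ∀ i, y i ≤ 1)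
    (hout : ∀ i, i ∉ Finset.Icc 1 n → y i = 0)
    (h1 : y 1 = 0) (hn : y n = 0) (hT1 : T1 n y = a) (hT2 : T2 n y = b)
    (i j : ℕ) (hi1 : y (i - 1) = 1) (hi : y i = 1) (hi2 : y (i + 1) = 0)
    (hij : i < j) (hj : y j = 1) (hbet : ∀ k, i < k → k < j → y k = 0) :
    ∃ y'' : ℕ → ℕ, Step n a b y y'' ∧ (∀ k, y'' k ≤ 1) ∧
      (∀ k, k ∉ Finset.Icc 1 n → y'' k = 0) ∧
      (∑ k ∈ Finset.Icc 1 n, (n - k) * y'' k) < (∑ k ∈ Finset.Icc 1 n, (n - k) * y k) := by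
  classical
  -- basic位置 facts
  have hmem : ∀ k, y k = 1 → k ∈ Finset.Icc 1 n := by
    intro k hk
    by_contra h
    rw [hout k h] at hk
    omega
  have hiI := hmem i hi
  have hi1I := hmem (i - 1) hi1
  have hjI := hmem j hj
  simp only [Finset.mem_Icc] at hiI hi1I hjI
  have hi3 : 3 ≤ i := by
    rcases Nat.lt_or_ge i 3 with h | h
    · interval_cases i <;> simp_all <;> omega
    · exact h
  have hin : i < n := by
    rcases Nat.eq_or_lt_of_le hiI.2 with h | h
    · rw [h] at hi; omega
    · exact h
  have hjn : j < n := by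
    rcases Nat.eq_or_lt_of_le hjI.2 with h | h
    · rw [h] at hj; omega
    · exact h
  have hij2 : i + 2 ≤ j := by
    rcases Nat.lt_or_ge j (i + 2) with h | h
    · have : j = i + 1 := by omega
      rw [this] at hj; omega
    · exact h
  have hj1 : y (j - 1) = 0 := hbet (j - 1) (by omega) (by omega)
  set y'' : ℕ → ℕ := Function.update (Function.update y i 0) (j - 1) 1 with hy''
  have hval : ∀ k, y'' k = if k = j - 1 then 1 else if k = i then 0 else y k := by
    intro k
    rw [hy'']
    by_cases h₁ : k = j - 1
    · subst h₁; simp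
    · by_cases h₂ : k = i
      · subst h₂; simp [Function.update_of_ne h₁, Function.update_self, h₁]
      · simp [Function.update_of_ne h₁, Function.update_of_ne h₂, h₁, h₂]
  have hvle : ∀ k, y'' k ≤ 1 := by
    intro k; rw [hval]; split_ifs with h₁ h₂ <;> first | omega | exact hle k
  have hvout : ∀ k, k ∉ Finset.Icc 1 n → y'' k = 0 := by
    intro k hk
    simp only [Finset.mem_Icc, not_and_or, not_le] at hk
    rw [hval]
    have hk1 : k ≠ j - 1 := by omega
    have hk2 : k ≠ i := by omega
    rw [if_neg hk1, if_neg hk2]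
    apply hout
    simp only [Finset.mem_Icc, not_and_or, not_le]
    exact hk
  -- T1
  have hT1' : T1 n y'' = a := by
    have hts : ({i, j - 1} : Finset ℕ) ⊆ Finset.Icc 1 n := by
      intro k hk
      simp only [Finset.mem_insert, Finset.mem_singleton] at hk
      rcases hk with h | h <;> subst h <;> simp only [Finset.mem_Icc] <;> omega
    have hsplit : ∀ f : ℕ → ℕ, ∑ k ∈ Finset.Icc 1 n, f k
        = ∑ k ∈ Finset.Icc 1 n \ {i, j - 1}, f k + (f i + f (j - 1)) := by
      intro f
      rw [← Finset.sum_sdiff hts]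
      congr 1
      rw [Finset.sum_insert (by simp only [Finset.mem_insert, Finset.mem_singleton]; omega), Finset.sum_singleton]
    have hbase : ∑ k ∈ Finset.Icc 1 n \ {i, j - 1}, y'' k
        = ∑ k ∈ Finset.Icc 1 n \ {i, j - 1}, y k := by
      apply Finset.sum_congr rfl
      intro k hk
      simp only [Finset.mem_sdiff, Finset.mem_insert, Finset.mem_singleton, not_or] at hk
      rw [hval, if_neg hk.2.2, if_neg hk.2.1]
    unfold T1 at hT1 ⊢
    rw [hsplit y'', hsplit y] at *
    have e1 : y'' i = 0 := by rw [hval]; rw [if_neg (by omega), if_pos rfl]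
    have e2 : y'' (j - 1) = 1 := by rw [hval]; rw [if_pos rfl]
    omega
  -- Φ decreases
  have hphi : (∑ k ∈ Finset.Icc 1 n, (n - k) * y'' k) < (∑ k ∈ Finset.Icc 1 n, (n - k) * y k) := by
    have hts : ({i, j - 1} : Finset ℕ) ⊆ Finset.Icc 1 n := by
      intro k hk
      simp only [Finset.mem_insert, Finset.mem_singleton] at hk
      rcases hk with h | h <;> subst h <;> simp only [Finset.mem_Icc] <;> omega
    have hsplit : ∀ f : ℕ → ℕ, ∑ k ∈ Finset.Icc 1 n, f k
        = ∑ k ∈ Finset.Icc 1 n \ {i, j - 1}, f k + (f i + f (j - 1)) := by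
      intro f
      rw [← Finset.sum_sdiff hts]
      congr 1
      rw [Finset.sum_insert (by simp only [Finset.mem_insert, Finset.mem_singleton]; omega), Finset.sum_singleton]
    rw [hsplit (fun k => (n - k) * y'' k), hsplit (fun k => (n - k) * y k)]
    have hbase : ∑ k ∈ Finset.Icc 1 n \ {i, j - 1}, (n - k) * y'' k
        = ∑ k ∈ Finset.Icc 1 n \ {i, j - 1}, (n - k) * y k := by
      apply Finset.sum_congr rfl
      intro k hk
      simp only [Finset.mem_sdiff, Finset.mem_insert, Finset.mem_singleton, not_or] at hk
      rw [hval, if_neg hk.2.2, if_neg hk.2.1]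
    rw [hbase]
    have e1 : y'' i = 0 := by rw [hval]; rw [if_neg (by omega), if_pos rfl]
    have e2 : y'' (j - 1) = 1 := by rw [hval]; rw [if_pos rfl]
    rw [e1, e2, hi, hj1]
    have : n - (j - 1) < n - i := by omega
    omega
  -- T2
  have hT2' : T2 n y'' = b := by
    have hval1 : ∀ k, k ≠ i → k ≠ j - 1 → y'' k = y k := by
      intro k h₁ h₂; rw [hval, if_neg h₂, if_neg h₁]
    have ei : y'' i = 0 := by rw [hval]; rw [if_neg (by omega), if_pos rfl]
    have ej : y'' (j - 1) = 1 := by rw [hval]; rw [if_pos rfl]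
    have ei1 : y'' (i - 1) = 1 := by rw [hval1 _ (by omega) (by omega)]; exact hi1
    have ejj : y'' j = 1 := by rw [hval1 _ (by omega) (by omega)]; exact hj
    have hii : i - 1 + 1 = i := by omega
    have hjj : j - 1 + 1 = j := by omega
    rcases Nat.eq_or_lt_of_le hij2 with hcase | hcase
    · -- j = i + 2
      have hj2 : j - 1 = i + 1 := by omega
      have hts : ({i - 1, i, i + 1} : Finset ℕ) ⊆ Finset.Ico 1 n := by
        intro k hk
        simp only [Finset.mem_insert, Finset.mem_singleton] at hk
        rcases hk with h | h | h <;> subst h <;> simp only [Finset.mem_Ico] <;> omega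
      have hsplit : ∀ f : ℕ → ℕ, ∑ k ∈ Finset.Ico 1 n, f k
          = ∑ k ∈ Finset.Ico 1 n \ {i - 1, i, i + 1}, f k + (f (i - 1) + (f i + f (i + 1))) := by
        intro f
        rw [← Finset.sum_sdiff hts]
        congr 1
        rw [Finset.sum_insert (by simp only [Finset.mem_insert, Finset.mem_singleton]; omega), Finset.sum_insert (by simp only [Finset.mem_insert, Finset.mem_singleton]; omega),
          Finset.sum_singleton]
      unfold T2 at hT2 ⊢
      rw [hsplit (fun k => if y'' k = y'' (k + 1) then 0 else 1)]
      rw [hsplit (fun k => if y k = y (k + 1) then 0 else 1)] at hT2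
      have hbase : ∑ k ∈ Finset.Ico 1 n \ {i - 1, i, i + 1},
          (if y'' k = y'' (k + 1) then 0 else 1)
          = ∑ k ∈ Finset.Ico 1 n \ {i - 1, i, i + 1},
          (if y k = y (k + 1) then 0 else 1) := by
        apply Finset.sum_congr rfl
        intro k hk
        simp only [Finset.mem_sdiff, Finset.mem_insert, Finset.mem_singleton, not_or] at hk
        rw [hval1 k (by omega) (by omega), hval1 (k + 1) (by omega) (by omega)]
      have c1 : (if y (i - 1) = y (i - 1 + 1) then (0:ℕ) else 1) = 0 := by
        rw [hii, hi1, hi]; simp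
      have c2 : (if y i = y (i + 1) then (0:ℕ) else 1) = 1 := by
        rw [hi, hi2]; simp
      have c3 : (if y (i + 1) = y (i + 1 + 1) then (0:ℕ) else 1) = 1 := by
        rw [hi2, show i + 1 + 1 = j from by omega, hj]; simp
      have d1 : (if y'' (i - 1) = y'' (i - 1 + 1) then (0:ℕ) else 1) = 1 := by
        rw [hii, ei1, ei]; simp
      have d2 : (if y'' i = y'' (i + 1) then (0:ℕ) else 1) = 1 := by
        rw [ei, show i + 1 = j - 1 from by omega, ej]; simp
      have d3 : (if y'' (i + 1) = y'' (i + 1 + 1) then (0:ℕ) else 1) = 0 := by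
        rw [show i + 1 = j - 1 from by omega, show j - 1 + 1 = j from by omega, ej, ejj]; simp
      omega
    · -- j ≥ i + 3
      have hts : ({i - 1, i, j - 2, j - 1} : Finset ℕ) ⊆ Finset.Ico 1 n := by
        intro k hk
        simp only [Finset.mem_insert, Finset.mem_singleton] at hk
        rcases hk with h | h | h | h <;> subst h <;> simp only [Finset.mem_Ico] <;> omega
      have hsplit : ∀ f : ℕ → ℕ, ∑ k ∈ Finset.Ico 1 n, f k
          = ∑ k ∈ Finset.Ico 1 n \ {i - 1, i, j - 2, j - 1}, f k
            + (f (i - 1) + (f i + (f (j - 2) + f (j - 1)))) := by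
        intro f
        rw [← Finset.sum_sdiff hts]
        congr 1
        rw [Finset.sum_insert (by simp only [Finset.mem_insert, Finset.mem_singleton]; omega), Finset.sum_insert (by simp only [Finset.mem_insert, Finset.mem_singleton]; omega),
          Finset.sum_insert (by simp only [Finset.mem_insert, Finset.mem_singleton]; omega), Finset.sum_singleton]
      unfold T2 at hT2 ⊢
      rw [hsplit (fun k => if y'' k = y'' (k + 1) then 0 else 1)]
      rw [hsplit (fun k => if y k = y (k + 1) then 0 else 1)] at hT2
      have hbase : ∑ k ∈ Finset.Ico 1 n \ {i - 1, i, j - 2, j - 1},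
          (if y'' k = y'' (k + 1) then 0 else 1)
          = ∑ k ∈ Finset.Ico 1 n \ {i - 1, i, j - 2, j - 1},
          (if y k = y (k + 1) then 0 else 1) := by
        apply Finset.sum_congr rfl
        intro k hk
        simp only [Finset.mem_sdiff, Finset.mem_insert, Finset.mem_singleton, not_or] at hk
        rw [hval1 k (by omega) (by omega), hval1 (k + 1) (by omega) (by omega)]
      have yj2 : y (j - 2) = 0 := hbet (j - 2) (by omega) (by omega)
      have c1 : (if y (i - 1) = y (i - 1 + 1) then (0:ℕ) else 1) = 0 := by
        rw [hii, hi1, hi]; simp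
      have c2 : (if y i = y (i + 1) then (0:ℕ) else 1) = 1 := by
        rw [hi, hi2]; simp
      have c3 : (if y (j - 2) = y (j - 2 + 1) then (0:ℕ) else 1) = 0 := by
        rw [show j - 2 + 1 = j - 1 from by omega, yj2, hj1]; simp
      have c4 : (if y (j - 1) = y (j - 1 + 1) then (0:ℕ) else 1) = 1 := by
        rw [hjj, hj1, hj]; simp
      have d1 : (if y'' (i - 1) = y'' (i - 1 + 1) then (0:ℕ) else 1) = 1 := by
        rw [hii, ei1, ei]; simp
      have d2 : (if y'' i = y'' (i + 1) then (0:ℕ) else 1) = 0 := by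
        have : y'' (i + 1) = 0 := by rw [hval1 _ (by omega) (by omega)]; exact hi2
        rw [ei, this]; simp
      have d3 : (if y'' (j - 2) = y'' (j - 2 + 1) then (0:ℕ) else 1) = 1 := by
        have : y'' (j - 2) = 0 := by rw [hval1 _ (by omega) (by omega)]; exact yj2
        rw [show j - 2 + 1 = j - 1 from by omega, this, ej]; simp
      have d4 : (if y'' (j - 1) = y'' (j - 1 + 1) then (0:ℕ) else 1) = 0 := by
        rw [hjj, ej, ejj]; simp
      omega
  refine ⟨y'', ⟨⟨j - 1, ?_, i, ?_, hj1, hi, rfl⟩, ?_, ?_, hT1', hT2'⟩, hvle, hvout, hphi⟩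
  · simp only [Finset.mem_Icc]; omega
  · simp only [Finset.mem_Icc]; omega
  · rw [hval, if_neg (by omega), if_neg (by omega)]; exact h1
  · rw [hval, if_neg (by omega), if_neg (by omega)]; exact hn

lemma T2_up (n : ℕ) (y : ℕ → ℕ) (hn1 : 1 ≤ n) (hle : ∀ i, y i ≤ 1)
    (h1 : y 1 = 0) (hn : y n = 0) :
    T2 n y = 2 * ∑ e ∈ Finset.Ico 1 n, (if y e = 0 ∧ y (e + 1) = 1 then 1 else 0) := by
  classical
  set U : ℕ := ∑ e ∈ Finset.Ico 1 n, (if y e = 0 ∧ y (e + 1) = 1 then 1 else 0) with hU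
  set D : ℕ := ∑ e ∈ Finset.Ico 1 n, (if y e = 1 ∧ y (e + 1) = 0 then 1 else 0) with hD
  have hsum : T2 n y = U + D := by
    rw [hU, hD, ← Finset.sum_add_distrib]
    apply Finset.sum_congr rfl
    intro e _
    have h1 : y e = 0 ∨ y e = 1 := by have := hle e; omega
    have h2 : y (e + 1) = 0 ∨ y (e + 1) = 1 := by have := hle (e + 1); omega
    rcases h1 with h1 | h1 <;> rcases h2 with h2 | h2 <;> simp [h1, h2]
  have htel : ∑ e ∈ Finset.Ico 1 n, ((y (e + 1) : ℤ) - (y e : ℤ)) = (y n : ℤ) - (y 1 : ℤ) := by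
    rw [Finset.sum_Ico_eq_sum_range]
    have h := Finset.sum_range_sub (f := fun i => (y (1 + i) : ℤ)) (n := n - 1)
    have h2 : 1 + (n - 1) = n := by omega
    rw [h2] at h
    exact h
  have hud : (U : ℤ) - (D : ℤ) = 0 := by
    have : (U : ℤ) - (D : ℤ) = ∑ e ∈ Finset.Ico 1 n, ((y (e + 1) : ℤ) - (y e : ℤ)) := by
      rw [hU, hD]
      push_cast
      rw [← Finset.sum_sub_distrib]
      apply Finset.sum_congr rfl
      intro e _
      have h1 : y e = 0 ∨ y e = 1 := by have := hle e; omega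
      have h2 : y (e + 1) = 0 ∨ y (e + 1) = 1 := by have := hle (e + 1); omega
      rcases h1 with h1 | h1 <;> rcases h2 with h2 | h2 <;> simp [h1, h2]
    rw [this, htel, h1, hn]
    simp
  have : U = D := by exact_mod_cast sub_eq_zero.mp hud
  omega

lemma key (n a b : ℕ) (ha : 1 ≤ a) : ∀ N, ∀ y : ℕ → ℕ,
    (∑ k ∈ Finset.Icc 1 n, (n - k) * y k) = N →
    (∀ i, y i ≤ 1) → (∀ i, i ∉ Finset.Icc 1 n → y i = 0) →
    y 1 = 0 → y n = 0 → T1 n y = a → T2 n y = b →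
    ∃ y' : ℕ → ℕ, ∃ p, Relation.ReflTransGen (Step n a b) y y' ∧
      1 ≤ p ∧ p + (a - b / 2 + 1) ≤ n + 1 ∧
      (∀ i ∈ Finset.Ico p (p + (a - b / 2 + 1)), y' i = 1) ∧
      y' (p - 1) = 0 ∧ y' (p + (a - b / 2 + 1)) = 0 ∧
      (∀ i ∈ Finset.Icc 1 n, y' i = 1 →
        i ∈ Finset.Ico p (p + (a - b / 2 + 1)) ∨ (y' (i - 1) = 0 ∧ y' (i + 1) = 0)) := by
  intro N
  induction N using Nat.strong_induction_on with
  | _ N IH =>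
  intro y hPhi hle hout h1 hn hT1 hT2
  classical
  by_cases hmov : ∃ i, y (i - 1) = 1 ∧ y i = 1 ∧ y (i + 1) = 0 ∧ ∃ j, i < j ∧ y j = 1
  · obtain ⟨i, hi1, hi, hi2, hex⟩ := hmov
    have hjspec := Nat.find_spec hex
    set j := Nat.find hex with hjdef
    obtain ⟨hij, hj⟩ := hjspec
    have hbet : ∀ k, i < k → k < j → y k = 0 := by
      intro k hk1 hk2
      have hnot := Nat.find_min hex hk2
      have := hle k
      omega
    obtain ⟨y'', hstep, hvle, hvout, hphi⟩ :=
      swap_move n a b y hle hout h1 hn hT1 hT2 i j hi1 hi hi2 hij hj hbet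
    have h1'' := hstep.2.1
    have hn'' := hstep.2.2.1
    have hT1'' := hstep.2.2.2.1
    have hT2'' := hstep.2.2.2.2
    rw [hPhi] at hphi
    obtain ⟨y', p, hrel, hrest⟩ := IH _ hphi y'' rfl hvle hvout h1'' hn'' hT1'' hT2''
    exact ⟨y', p, Relation.ReflTransGen.head hstep hrel, hrest⟩
  · push_neg at hmov
    have hone : ∃ i ∈ Finset.Icc 1 n, y i = 1 := by
      by_contra h
      push_neg at h
      have : T1 n y = 0 :=
        Finset.sum_eq_zero (fun i hi => by have := h i hi; have := hle i; omega)
      omega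
    obtain ⟨i₀, hi₀I, hi₀⟩ := hone
    have hSne : (Finset.filter (fun i => y i = 1) (Finset.Icc 1 n)).Nonempty :=
      ⟨i₀, Finset.mem_filter.mpr ⟨hi₀I, hi₀⟩⟩
    set q := (Finset.filter (fun i => y i = 1) (Finset.Icc 1 n)).max' hSne with hqdef
    have hqS : q ∈ Finset.filter (fun i => y i = 1) (Finset.Icc 1 n) :=
      Finset.max'_mem _ hSne
    rw [Finset.mem_filter, Finset.mem_Icc] at hqS
    have hq : y q = 1 := hqS.2
    have hq1 : 1 ≤ q := hqS.1.1
    have hqn' : q ≤ n := hqS.1.2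
    have hqmax : ∀ i, y i = 1 → i ≤ q := by
      intro i hyi
      rcases le_or_gt i n with h | h
      · have hi1' : 1 ≤ i := by
          by_contra hc
          have : i = 0 := by omega
          rw [this] at hyi
          rw [hout 0 (by simp)] at hyi
          omega
        exact Finset.le_max' (Finset.filter (fun j => y j = 1) (Finset.Icc 1 n)) i
          (Finset.mem_filter.mpr ⟨Finset.mem_Icc.mpr ⟨hi1', h⟩, hyi⟩)
      · exfalso
        rw [hout i (by simp [Finset.mem_Icc]; omega)] at hyi
        omega
    have hgt : ∀ i, q < i → y i = 0 := by
      intro i hqi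
      have := hle i
      by_contra hc
      have : y i = 1 := by omega
      have := hqmax i this
      omega
    have hqn : q < n := by
      rcases Nat.eq_or_lt_of_le hqn' with h | h
      · rw [h] at hq; omega
      · exact h
    have hPex : ∃ m, ∀ k, m ≤ k → k ≤ q → y k = 1 :=
      ⟨q, fun k hk1 hk2 => by have : k = q := le_antisymm hk2 hk1; rw [this]; exact hq⟩
    set p := Nat.find hPex with hpdef
    have hp : ∀ k, p ≤ k → k ≤ q → y k = 1 := Nat.find_spec hPex
    have hpq : p ≤ q := Nat.find_le (fun k hk1 hk2 => by
      have : k = q := le_antisymm hk2 hk1; rw [this]; exact hq)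
    have hp2 : 2 ≤ p := by
      by_contra h
      push_neg at h
      have := hp 1 (by omega) (by omega)
      omega
    have hp1 : y (p - 1) = 0 := by
      have hmin := Nat.find_min hPex (m := p - 1) (by omega)
      push_neg at hmin
      obtain ⟨k, hk1, hk2, hk3⟩ := hmin
      have hkp : k = p - 1 := by
        by_contra hc
        exact hk3 (hp k (by omega) hk2)
      rw [hkp] at hk3
      have := hle (p - 1)
      omega
    have claim_left : ∀ i, i < p → y i = 1 → y (i + 1) = 0 := by
      intro i hip hyi
      by_contra hc
      have hyi1 : y (i + 1) = 1 := by have := hle (i + 1); omega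
      have hiq : i ≤ q := hqmax i hyi
      have hm0ex : ∃ m, y (i + m) = 0 :=
        ⟨n + 1 - i, hout _ (by simp [Finset.mem_Icc]; omega)⟩
      have hm0 : y (i + Nat.find hm0ex) = 0 := Nat.find_spec hm0ex
      set m0 := Nat.find hm0ex with hm0def
      have hm00 : m0 ≠ 0 := by
        intro h
        rw [h] at hm0
        simp at hm0
        omega
      have hm01 : m0 ≠ 1 := by
        intro h
        rw [h] at hm0
        omega
      have hm02 : 2 ≤ m0 := by omega
      have hall : ∀ k, i ≤ k → k < i + m0 → y k = 1 := by
        intro k h1k h2k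
        have hfm := Nat.find_min hm0ex (m := k - i) (by omega)
        rw [show i + (k - i) = k from by omega] at hfm
        have := hle k
        omega
      have hyt : y (i + m0 - 1) = 1 := hall _ (by omega) (by omega)
      have hyt1 : y (i + m0 - 1 - 1) = 1 := hall _ (by omega) (by omega)
      have hyt2 : y (i + m0 - 1 + 1) = 0 := by
        rw [show i + m0 - 1 + 1 = i + m0 from by omega]
        exact hm0
      have htp : i + m0 - 1 < p := by
        by_contra hc2
        push_neg at hc2
        have : y (p - 1) = 1 := hall (p - 1) (by omega) (by omega)
        omega
      exact hmov (i + m0 - 1) hyt1 hyt hyt2 p (by omega) (hp p le_rfl hpq)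
    -- counting
    set m := ∑ k ∈ Finset.Ico 1 p, y k with hmdef
    have ha' : a = m + (q + 1 - p) := by
      have h1s : ∑ k ∈ Finset.Ico 1 p, y k + ∑ k ∈ Finset.Ico p (n + 1), y k
          = ∑ k ∈ Finset.Ico 1 (n + 1), y k :=
        Finset.sum_Ico_consecutive _ (by omega) (by omega)
      have h2s : ∑ k ∈ Finset.Ico p (q + 1), y k + ∑ k ∈ Finset.Ico (q + 1) (n + 1), y k
          = ∑ k ∈ Finset.Ico p (n + 1), y k :=
        Finset.sum_Ico_consecutive _ (by omega) (by omega)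
      have h3s : ∑ k ∈ Finset.Ico p (q + 1), y k = q + 1 - p := by
        have hone1 : ∀ k ∈ Finset.Ico p (q + 1), y k = 1 := by
          intro k hk
          rw [Finset.mem_Ico] at hk
          exact hp k hk.1 (by omega)
        rw [Finset.sum_congr rfl hone1, Finset.sum_const, smul_eq_mul, mul_one, Nat.card_Ico]
      have h4s : ∑ k ∈ Finset.Ico (q + 1) (n + 1), y k = 0 :=
        Finset.sum_eq_zero (fun k hk => by
          rw [Finset.mem_Ico] at hk
          exact hgt k (by omega))
      have hIccIco : Finset.Icc 1 n = Finset.Ico 1 (n + 1) := by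
        ext x; simp [Finset.mem_Icc, Finset.mem_Ico, Nat.lt_succ_iff]
      unfold T1 at hT1
      rw [hIccIco] at hT1
      omega
    have hUval : (∑ e ∈ Finset.Ico 1 n, if y e = 0 ∧ y (e + 1) = 1 then (1:ℕ) else 0)
        = m + 1 := by
      have hper : ∀ e ∈ Finset.Ico 1 n,
          (if y e = 0 ∧ y (e + 1) = 1 then (1:ℕ) else 0)
          = (if e + 1 < p then y (e + 1) else 0) + (if e = p - 1 then 1 else 0) := by
        intro e he
        rw [Finset.mem_Ico] at he
        rcases lt_trichotomy (e + 1) p with hcase | hcase | hcase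
        · rw [if_pos hcase, if_neg (show ¬ (e = p - 1) from by omega)]
          have h01 : y (e + 1) = 0 ∨ y (e + 1) = 1 := by have := hle (e + 1); omega
          rcases h01 with h0 | h0
          · simp [h0]
          · have hye : y e = 0 := by
              by_contra hc2
              have hye1 : y e = 1 := by have := hle e; omega
              have := claim_left e (by omega) hye1
              omega
            simp [hye, h0]
        · rw [if_neg (show ¬ (e + 1 < p) from by omega),
            if_pos (show e = p - 1 from by omega)]
          have hyp : y (e + 1) = 1 := by rw [hcase]; exact hp p le_rfl hpq
          have hye : y e = 0 := by rw [show e = p - 1 from by omega]; exact hp1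
          simp [hye, hyp]
        · rw [if_neg (show ¬ (e + 1 < p) from by omega),
            if_neg (show ¬ (e = p - 1) from by omega)]
          rcases le_or_gt e q with hq' | hq'
          · have hye1 : y e = 1 := hp e (by omega) hq'
            simp [hye1]
          · have hye0 : y (e + 1) = 0 := hgt (e + 1) (by omega)
            simp [hye0]
      rw [Finset.sum_congr rfl hper, Finset.sum_add_distrib]
      have hsecond : (∑ e ∈ Finset.Ico 1 n, if e = p - 1 then (1:ℕ) else 0) = 1 := by
        rw [Finset.sum_ite_eq' (Finset.Ico 1 n) (p - 1) (fun _ => (1:ℕ))]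
        rw [if_pos (by rw [Finset.mem_Ico]; omega)]
      have hfirst : (∑ e ∈ Finset.Ico 1 n, if e + 1 < p then y (e + 1) else 0) = m := by
        have hre : (∑ e ∈ Finset.Ico 1 n, if e + 1 < p then y (e + 1) else 0)
            = ∑ x ∈ Finset.Ico 2 (n + 1), (if x < p then y x else 0) := by
          rw [Finset.sum_Ico_eq_sum_range, Finset.sum_Ico_eq_sum_range]
          rw [show n - 1 = n + 1 - 2 from by omega]
          apply Finset.sum_congr rfl
          intro i _
          rw [show 1 + i + 1 = 2 + i from by omega]
        rw [hre]
        have h2 : ∑ x ∈ Finset.Ico 1 (n + 1), (if x < p then y x else 0)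
            = (if (1:ℕ) < p then y 1 else 0)
              + ∑ x ∈ Finset.Ico 2 (n + 1), (if x < p then y x else 0) :=
          Finset.sum_eq_sum_Ico_succ_bot (by omega) _
        have h3 : ∑ x ∈ Finset.Ico 1 p, (if x < p then y x else 0)
              + ∑ x ∈ Finset.Ico p (n + 1), (if x < p then y x else 0)
            = ∑ x ∈ Finset.Ico 1 (n + 1), (if x < p then y x else 0) :=
          Finset.sum_Ico_consecutive _ (by omega) (by omega)
        have h4 : ∑ x ∈ Finset.Ico p (n + 1), (if x < p then y x else 0) = 0 :=
          Finset.sum_eq_zero (fun x hx => by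
            rw [Finset.mem_Ico] at hx
            rw [if_neg (by omega)])
        have h5 : ∑ x ∈ Finset.Ico 1 p, (if x < p then y x else 0) = m := by
          rw [hmdef]
          apply Finset.sum_congr rfl
          intro x hx
          rw [Finset.mem_Ico] at hx
          rw [if_pos hx.2]
        have h6 : (if (1:ℕ) < p then y 1 else 0) = 0 := by rw [h1]; simp
        omega
      omega
    have hb : b = 2 * (m + 1) := by
      rw [← hT2, T2_up n y (by omega) hle h1 hn, hUval]
    have hL : a - b / 2 + 1 = q + 1 - p := by omega
    refine ⟨y, p, Relation.ReflTransGen.refl, by omega, by omega, ?_, hp1, ?_, ?_⟩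
    · intro i hi
      rw [hL, Finset.mem_Ico] at hi
      exact hp i hi.1 (by omega)
    · rw [hL, show p + (q + 1 - p) = q + 1 from by omega]
      exact hgt (q + 1) (by omega)
    · intro i hiI hyi
      rw [hL]
      rw [Finset.mem_Icc] at hiI
      have hiq : i ≤ q := hqmax i hyi
      rcases Nat.lt_or_ge i p with hip | hip
      · right
        constructor
        · by_contra hc
          have hyi1 : y (i - 1) = 1 := by have := hle (i - 1); omega
          have := claim_left (i - 1) (by omega) hyi1
          rw [show i - 1 + 1 = i from by omega] at this
          omega
        · exact claim_left i hip hyi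
      · left
        rw [Finset.mem_Ico]
        omega

/-- Every 1-dimensional configuration in `S(a,b)` can be transformed by simple
swaps within `S(a,b)` (merging components one into another, each step keeping
`T1` and `T2` fixed) into the max-singleton configuration consisting of
`b/2 - 1` singletons and one run of `a - b/2 + 1` consecutive ones. -/
theorem one_dim_reach_max_singleton (a b : ℕ) (ha : 1 ≤ a) (hb : Even b) :
    ∃ n₀ : ℕ, ∀ n, n₀ ≤ n → ∀ y : ℕ → ℕ,
      (∀ i, y i ≤ 1) → (∀ i, i ∉ Finset.Icc 1 n → y i = 0) →
      y 1 = 0 → y n = 0 → T1 n y = a → T2 n y = b →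
      ∃ y' : ℕ → ℕ, ∃ p,
        Relation.ReflTransGen (Step n a b) y y' ∧
        1 ≤ p ∧ p + (a - b / 2 + 1) ≤ n + 1 ∧
        (∀ i ∈ Finset.Ico p (p + (a - b / 2 + 1)), y' i = 1) ∧
        y' (p - 1) = 0 ∧ y' (p + (a - b / 2 + 1)) = 0 ∧
        (∀ i ∈ Finset.Icc 1 n, y' i = 1 →
          i ∈ Finset.Ico p (p + (a - b / 2 + 1)) ∨ (y' (i - 1) = 0 ∧ y' (i + 1) = 0)) := by
  refine ⟨0, fun n _ y hle hout h1 hn hT1 hT2 => ?_⟩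
  exact key n a b ha _ y rfl hle hout h1 hn hT1 hT2
end
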